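/- arXiv:1008.4808 — 10 statements merged into one kernel-verified Lean document; each statement's English description precedes it below -/
import Mathlib

section
/- Let K be a linearly ordered field and let t ≥ 1. Then: (i) every nonzero polynomial f ∈ K[x] having at most t+1 nonzero terms has at most 2t distinct roots in K \ {0}; and (ii) there exists a polynomial in K[x] with exactly t+1 nonzero terms having exactly 2t distinct roots in K \ {0} (for instance (x²−1²)(x²−2²)⋯(x²−t²)). In other words, B₁(t,K) = 2t. -/
/-!
By Descartes' rule of signs, the positive roots of `f` number at most the sign variations of its
coefficient sequence, hence at most `#f.support - 1`; applied to `f(-x)`, which has the same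
support, the same bounds the negative roots. The bound `2 * (#f.support - 1)` is attained by
`f(x) = q(x²)` with `q = (x - 1²)⋯(x - t²)`: it has the `2t` roots `±1, …, ±t` and at most
`t + 1` terms, and the bound itself then forces exactly `t + 1` terms.
-/

open Finset

namespace Polynomial

theorem signVariations_le_card_support_sub_one {R : Type*} [Semiring R] [LinearOrder R]
    (P : R[X]) : P.signVariations ≤ #P.support - 1 := by
  induction hn : #P.support generalizing P with
  | zero => simp [card_support_eq_zero.1 hn]
  | succ n ih =>
    rcases n.eq_zero_or_pos with rfl | hn0
    · obtain ⟨k, c, rfl⟩ := card_support_le_one_iff_monomial.1 hn.le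
      simp
    · calc P.signVariations ≤ P.eraseLead.signVariations + 1 := P.signVariations_le_eraseLead_succ
        _ ≤ n - 1 + 1 := by gcongr; exact ih _ (card_support_eraseLead' hn)
        _ = n + 1 - 1 := by omega

theorem support_comp_neg_X {R : Type*} [Ring R] (P : R[X]) :
    (P.comp (-X)).support = P.support := by
  ext n
  rw [mem_support_iff, mem_support_iff, show (-X : R[X]) = C (-1) * X by simp, comp_C_mul_X_coeff]
  simp

theorem card_support_expand_le {R : Type*} [CommSemiring R] {p : ℕ} (hp : 0 < p) (f : R[X]) :
    #(expand R p f).support ≤ #f.support :=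
  calc #(expand R p f).support ≤ #(f.support.image (p * ·)) := card_le_card fun n hn => by
        rw [mem_support_iff, coeff_expand hp] at hn
        obtain ⟨k, rfl⟩ : p ∣ n := by by_contra h; simp [h] at hn
        exact mem_image.2 ⟨k, by simpa [hp.ne'] using hn, rfl⟩
    _ ≤ #f.support := card_image_le

variable {R : Type*} [CommRing R] [LinearOrder R] [IsStrictOrderedRing R]

theorem card_roots_toFinset_filter_pos_le (P : R[X]) :
    #{x ∈ P.roots.toFinset | 0 < x} ≤ #P.support - 1 :=
  calc #{x ∈ P.roots.toFinset | 0 < x} = #(P.roots.filter (0 < ·)).toFinset := by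
        rw [Multiset.toFinset_filter]
    _ ≤ P.roots.countP (0 < ·) := by
        rw [Multiset.countP_eq_card_filter]
        exact Multiset.toFinset_card_le _
    _ ≤ P.signVariations := P.roots_countP_pos_le_signVariations
    _ ≤ #P.support - 1 := P.signVariations_le_card_support_sub_one

theorem card_roots_toFinset_filter_neg_le (P : R[X]) :
    #{x ∈ P.roots.toFinset | x < 0} ≤ #P.support - 1 :=
  calc #{x ∈ P.roots.toFinset | x < 0} = #{x ∈ (P.comp (-X)).roots.toFinset | 0 < x} := by
        rw [roots_comp_neg_X, Multiset.toFinset_map, filter_image,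
          card_image_of_injective _ neg_injective]
        simp only [Left.neg_pos_iff]
    _ ≤ #P.support - 1 := by
        simpa only [support_comp_neg_X] using (P.comp (-X)).card_roots_toFinset_filter_pos_le

theorem card_roots_toFinset_filter_ne_zero_le (P : R[X]) :
    #{x ∈ P.roots.toFinset | x ≠ 0} ≤ 2 * (#P.support - 1) :=
  calc #{x ∈ P.roots.toFinset | x ≠ 0}
      = #{x ∈ P.roots.toFinset | 0 < x} + #{x ∈ P.roots.toFinset | x < 0} := by
        rw [← card_union_of_disjoint (disjoint_filter.2 fun _ _ h => h.asymm), ← filter_or]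
        simp only [ne_iff_lt_or_gt, or_comm]
    _ ≤ 2 * (#P.support - 1) := by
        linarith [P.card_roots_toFinset_filter_pos_le, P.card_roots_toFinset_filter_neg_le]

theorem exists_card_support_eq_and_card_roots_toFinset_filter_ne_zero_eq (t : ℕ) :
    ∃ f : R[X], f ≠ 0 ∧ #f.support = t + 1 ∧ #{x ∈ f.roots.toFinset | x ≠ 0} = 2 * t := by
  have hq : (∏ i ∈ Icc 1 t, (X - C ((i : R) ^ 2))).Monic :=
    monic_prod_of_monic _ _ fun i _ => monic_X_sub_C _
  have hq_natDegree : (∏ i ∈ Icc 1 t, (X - C ((i : R) ^ 2))).natDegree = t := by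
    rw [natDegree_prod_of_monic _ _ fun (i : ℕ) _ => monic_X_sub_C ((i : R) ^ 2)]
    simp_rw [natDegree_X_sub_C, sum_const, Nat.card_Icc, smul_eq_mul, mul_one, Nat.add_sub_cancel]
  set q : R[X] := ∏ i ∈ Icc 1 t, (X - C ((i : R) ^ 2))
  set f := expand R 2 q
  have hf : f ≠ 0 := (hq.expand two_pos).ne_zero
  have hf_support : #f.support ≤ t + 1 :=
    (card_support_expand_le two_pos q).trans (hq_natDegree ▸ q.card_supp_le_succ_natDegree)
  have hf_roots : 2 * t ≤ #{x ∈ f.roots.toFinset | x ≠ 0} :=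
    calc 2 * t = #(((Icc (-t : ℤ) t).erase 0).image (Int.cast : ℤ → R)) := by
          rw [card_image_of_injective _ Int.cast_injective, card_erase_of_mem (by simp),
            Int.card_Icc]
          omega
      _ ≤ _ := card_le_card fun x hx => by
          obtain ⟨z, hz, rfl⟩ := mem_image.1 hx
          rw [mem_erase, mem_Icc] at hz
          refine mem_filter.2
            ⟨Multiset.mem_toFinset.2 ((mem_roots hf).2 ?_), Int.cast_ne_zero.2 hz.1⟩
          rw [IsRoot, expand_eval, eval_prod]
          refine prod_eq_zero (i := z.natAbs) (mem_Icc.2 (by omega)) ?_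
          simp [Nat.cast_natAbs]
  have hf_bound := f.card_roots_toFinset_filter_ne_zero_le
  have hf_support_pos : 0 < #f.support := card_pos.2 (support_nonempty.2 hf)
  exact ⟨f, hf, by omega, by omega⟩

end Polynomial

theorem B1_ordered_field_eq_two_mul_general (K : Type*) [Field K] [LinearOrder K] [IsStrictOrderedRing K] (t : ℕ) :
    (∀ f : Polynomial K, f ≠ 0 → f.support.card ≤ t + 1 →
      (f.roots.toFinset.filter (fun r => r ≠ 0)).card ≤ 2 * t) ∧
    (∃ f : Polynomial K, f ≠ 0 ∧ f.support.card = t + 1 ∧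
      (f.roots.toFinset.filter (fun r => r ≠ 0)).card = 2 * t) :=
  ⟨fun f _ hf => f.card_roots_toFinset_filter_ne_zero_le.trans (by omega),
    Polynomial.exists_card_support_eq_and_card_roots_toFinset_filter_ne_zero_eq t⟩

/-- For a linearly ordered field `K` and `t ≥ 1`:
(i) every nonzero polynomial with at most `t+1` nonzero terms has at most `2t`
distinct roots in `K \ {0}`; (ii) some polynomial with exactly `t+1` nonzero
terms has exactly `2t` distinct roots in `K \ {0}`.  Hence `B₁(t,K) = 2t`. -/
theorem B1_ordered_field_eq_two_mul (K : Type*) [Field K] [LinearOrder K] [IsStrictOrderedRing K] (t : ℕ) (ht : 1 ≤ t) :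
    (∀ f : Polynomial K, f ≠ 0 → f.support.card ≤ t + 1 →
      (f.roots.toFinset.filter (fun r => r ≠ 0)).card ≤ 2 * t) ∧
    (∃ f : Polynomial K, f ≠ 0 ∧ f.support.card = t + 1 ∧
      (f.roots.toFinset.filter (fun r => r ≠ 0)).card = 2 * t) :=
  B1_ordered_field_eq_two_mul_general K t
end

section
/- Let t ≥ 1 and let α = (α₁,…,α_t) ∈ ℕ^t with 0 < α₁ < ⋯ < α_t. In the polynomial ring ℤ[x₀,…,x_t], the standard Vandermonde determinant V_st = ∏_{0≤i<j≤t} (x_j − x_i) divides the generalized Vandermonde determinant V_α = det M_α(x₀,…,x_t), and the quotient P_α = V_α / V_st is a nonzero homogeneous polynomial of degree α₁+⋯+α_t − t(t+1)/2 all of whose coefficients are nonnegative integers. In particular V_α is homogeneous of degree α₁+⋯+α_t. -/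
/-!
Subtracting `x₀ ^ (α (j+1) - α j)` times column `j` from column `j + 1` of `(xᵢ ^ α j)` clears
the row of `x₀` except for `x₀ ^ α 0`, and turns the entry in row `i` into
`xᵢ ^ α j * (xᵢ ^ g - x₀ ^ g) = (xᵢ - x₀) * ∑_{m < g} x₀ ^ (g - 1 - m) * xᵢ ^ (α j + m)`.
Pulling out the factors `xᵢ - x₀` and expanding the geometric sums column by column writes `V_α`
as `x₀ ^ α 0 * ∏ᵢ (xᵢ - x₀)` times a sum of monomials in `x₀` times generalized Vandermonde
determinants in `x₁, …, x_t`, again with strictly increasing exponents. Since `V_st` splits off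
the same factor `∏ᵢ (xᵢ - x₀)`, induction on the number of variables produces the quotient from
monomials by sums and products alone: its coefficients are natural numbers and its value at
`(1, …, 1)` is positive.
-/

open MvPolynomial Finset Matrix

theorem pow_add_sub_pow_mul_pow {R : Type*} [CommRing R] (x y : R) (a g : ℕ) :
    x ^ (a + g) - y ^ g * x ^ a = (x - y) * ∑ m ∈ range g, y ^ (g - 1 - m) * x ^ (a + m) := by
  calc x ^ (a + g) - y ^ g * x ^ a = x ^ a * (x ^ g - y ^ g) := by ring
    _ = _ := by
      rw [← (Commute.all x y).geom_sum₂_mul, sum_mul, mul_sum, mul_sum]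
      exact sum_congr rfl fun m _ => by ring

theorem Fin.val_le_of_strictMono {n : ℕ} {α : Fin n → ℕ} (hα : StrictMono α) (j : Fin n) :
    (j : ℕ) ≤ α j := by
  obtain ⟨k, hk⟩ := j
  induction k with
  | zero => exact Nat.zero_le _
  | succ k ih => exact (ih (by omega)).trans_lt (hα (Fin.mk_lt_mk.2 k.lt_succ_self))

theorem Fin.sum_sub_val_of_strictMono {n : ℕ} {α : Fin n → ℕ} (hα : StrictMono α) :
    ∑ j, (α j - j) = ∑ j, α j - n * (n - 1) / 2 := by
  have hsum : ∑ j, (α j - j) + ∑ j : Fin n, (j : ℕ) = ∑ j, α j := by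
    rw [← sum_add_distrib]
    exact sum_congr rfl fun j _ => Nat.sub_add_cancel (Fin.val_le_of_strictMono hα j)
  rw [Fin.sum_univ_eq_sum_range (fun j => j), sum_range_id] at hsum
  omega

theorem strictMono_add_of_mem_piFinset {n : ℕ} {α : Fin (n + 1) → ℕ} (hα : Monotone α)
    {γ : Fin n → ℕ} (hγ : γ ∈ Fintype.piFinset fun j : Fin n => range (α j.succ - α j.castSucc)) :
    StrictMono fun j => α j.castSucc + γ j := by
  intro j k hjk
  have hγj := mem_range.mp (Fintype.mem_piFinset.mp hγ j)
  calc α j.castSucc + γ j < α j.succ := by omega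
    _ ≤ α k.castSucc := hα (Fin.succ_le_castSucc_iff.mpr hjk)
    _ ≤ α k.castSucc + γ k := Nat.le_add_right _ _

namespace Matrix

variable {R : Type*} [CommRing R]

theorem det_of_finset_sum_col {n ι : Type*} [Fintype n] [DecidableEq n] (s : n → Finset ι)
    (f : n → ι → n → R) :
    det (of fun i j => ∑ k ∈ s j, f j k i) =
      ∑ γ ∈ Fintype.piFinset s, det (of fun i j => f j (γ j) i) := by
  rw [← det_transpose]
  simp_rw [← det_transpose (of fun i j => f j _ i)]
  convert (detRowAlternating : (n → R) [⋀^n]→ₗ[R] R).map_sum_finset f s using 1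
  · congr 1
    ext j i
    simp [Finset.sum_apply]
  · rfl

theorem det_vandermonde_succ {n : ℕ} (x : Fin (n + 1) → R) :
    det (vandermonde x) = (∏ i : Fin n, (x i.succ - x 0)) * det (vandermonde (x ∘ Fin.succ)) := by
  simp [det_vandermonde, Fin.prod_univ_succ]

theorem det_vandermonde_eq_prod_filter_lt {n : ℕ} (x : Fin n → R) :
    det (vandermonde x) =
      ∏ p ∈ univ.filter (fun p : Fin n × Fin n => p.1 < p.2), (x p.2 - x p.1) := by
  rw [det_vandermonde, prod_filter, Fintype.prod_prod_type]
  simp_rw [← prod_filter, filter_lt_eq_Ioi]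

theorem det_of_pow_eq_mul_det_sub {n : ℕ} (x : Fin (n + 1) → R) {α : Fin (n + 1) → ℕ}
    (hα : Monotone α) :
    det (of fun i j => x i ^ α j) = x 0 ^ α 0 * det (of fun i j : Fin n =>
      x i.succ ^ α j.succ - x 0 ^ (α j.succ - α j.castSucc) * x i.succ ^ α j.castSucc) := by
  have hgap (j : Fin n) :
      x 0 ^ α j.succ = x 0 ^ (α j.succ - α j.castSucc) * x 0 ^ α j.castSucc := by
    rw [← pow_add, Nat.sub_add_cancel (hα j.castSucc_le_succ)]
  rw [det_eq_of_forall_col_eq_smul_add_pred (A := of fun i j => x i ^ α j)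
      (B := of fun i => Fin.cons (x i ^ α 0)
        fun j => x i ^ α j.succ - x 0 ^ (α j.succ - α j.castSucc) * x i ^ α j.castSucc)
      (fun j => x 0 ^ (α j.succ - α j.castSucc)) (fun i => rfl) (fun i j => by simp),
    det_succ_row_zero, Fin.sum_univ_succ]
  simp only [of_apply, Fin.cons_zero, Fin.cons_succ, hgap, sub_self, mul_zero, zero_mul,
    sum_const_zero, add_zero, Fin.val_zero, pow_zero, one_mul, Fin.succAbove_zero]
  rfl

theorem det_of_pow_eq_sum {n : ℕ} (x : Fin (n + 1) → R) {α : Fin (n + 1) → ℕ} (hα : Monotone α) :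
    det (of fun i j => x i ^ α j) =
      x 0 ^ α 0 * (∏ i : Fin n, (x i.succ - x 0)) *
        ∑ γ ∈ Fintype.piFinset fun j : Fin n => range (α j.succ - α j.castSucc),
          x 0 ^ (∑ j, (α j.succ - α j.castSucc - 1 - γ j)) *
            det (of fun i j : Fin n => x i.succ ^ (α j.castSucc + γ j)) := by
  set g : Fin n → ℕ := fun j => α j.succ - α j.castSucc
  have hfactor : det (of fun i j : Fin n =>
        x i.succ ^ α j.succ - x 0 ^ g j * x i.succ ^ α j.castSucc) =
      (∏ i : Fin n, (x i.succ - x 0)) * det (of fun i j =>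
        ∑ m ∈ range (g j), x 0 ^ (g j - 1 - m) * x i.succ ^ (α j.castSucc + m)) := by
    rw [← det_mul_column]
    congr 1
    ext i j
    rw [of_apply, of_apply, of_apply, ← pow_add_sub_pow_mul_pow,
      Nat.add_sub_cancel' (hα j.castSucc_le_succ)]
  rw [det_of_pow_eq_mul_det_sub x hα, hfactor, det_of_finset_sum_col, ← mul_assoc]
  congr 1
  refine sum_congr rfl fun γ _ => ?_
  rw [← prod_pow_eq_pow_sum, ← det_mul_row]
  rfl

end Matrix

/-- The quotient `P_α = V_α / V_st`, defined by the recursion that `Matrix.det_of_pow_eq_sum`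
suggests; with coefficients in `ℕ`, their nonnegativity holds by construction. -/
noncomputable def vandermondeQuot : (n : ℕ) → (Fin n → ℕ) → MvPolynomial (Fin n) ℕ
  | 0, _ => 1
  | n + 1, α => X 0 ^ α 0 *
      ∑ γ ∈ Fintype.piFinset fun j : Fin n => range (α j.succ - α j.castSucc),
        X 0 ^ (∑ j, (α j.succ - α j.castSucc - 1 - γ j)) *
          rename Fin.succ (vandermondeQuot n fun j => α j.castSucc + γ j)

theorem Matrix.det_of_pow_eq_det_vandermonde_mul_aeval {S : Type*} [CommRing S] :
    ∀ {n : ℕ} (x : Fin n → S) {α : Fin n → ℕ}, Monotone α →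
      det (of fun i j => x i ^ α j) = det (vandermonde x) * aeval x (vandermondeQuot n α)
  | 0, _, _, _ => by simp [vandermondeQuot]
  | n + 1, x, α, hα => by
    rw [det_of_pow_eq_sum x hα, det_vandermonde_succ, vandermondeQuot]
    simp only [map_mul, map_sum, map_pow, aeval_X, aeval_rename, mul_sum]
    refine sum_congr rfl fun γ hγ => ?_
    have hdet := det_of_pow_eq_det_vandermonde_mul_aeval (x ∘ Fin.succ)
      (strictMono_add_of_mem_piFinset hα hγ).monotone
    simp only [Function.comp_apply] at hdet
    rw [hdet]
    ring

theorem isHomogeneous_vandermondeQuot :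
    ∀ {n : ℕ} {α : Fin n → ℕ}, StrictMono α →
      (vandermondeQuot n α).IsHomogeneous (∑ j, (α j - j))
  | 0, _, _ => by simpa [vandermondeQuot] using isHomogeneous_one _ _
  | n + 1, α, hα => by
    rw [vandermondeQuot, Fin.sum_univ_succ]
    refine (isHomogeneous_X_pow _ _).mul (IsHomogeneous.sum _ _ _ fun γ hγ => ?_)
    have hdeg : ∑ j, (α j.succ - α j.castSucc - 1 - γ j) + ∑ j, (α j.castSucc + γ j - j) =
        ∑ j : Fin n, (α j.succ - (j.succ : ℕ)) := by
      rw [← sum_add_distrib]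
      refine sum_congr rfl fun j _ => ?_
      have hγj := mem_range.mp (Fintype.mem_piFinset.mp hγ j)
      have hj := Fin.val_le_of_strictMono hα j.castSucc
      simp only [Fin.val_succ, Fin.val_castSucc] at hj ⊢
      omega
    rw [← hdeg]
    have hβ := strictMono_add_of_mem_piFinset hα.monotone hγ
    exact (isHomogeneous_X_pow _ _).mul (isHomogeneous_vandermondeQuot hβ).rename_isHomogeneous

theorem eval_one_vandermondeQuot_pos :
    ∀ {n : ℕ} {α : Fin n → ℕ}, StrictMono α → 0 < eval 1 (vandermondeQuot n α)
  | 0, _, _ => by simp [vandermondeQuot]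
  | n + 1, α, hα => by
    simp only [vandermondeQuot, map_mul, map_sum, map_pow, eval_X, eval_rename, Pi.one_apply,
      one_pow, one_mul]
    refine sum_pos (fun γ hγ => eval_one_vandermondeQuot_pos
      (strictMono_add_of_mem_piFinset hα.monotone hγ)) ⟨0, Fintype.mem_piFinset.mpr fun j => ?_⟩
    simpa using hα j.castSucc_lt_succ

theorem vandermondeQuot_ne_zero {n : ℕ} {α : Fin n → ℕ} (hα : StrictMono α) :
    vandermondeQuot n α ≠ 0 := fun h => by
  simpa [h] using eval_one_vandermondeQuot_pos hα

theorem MvPolynomial.isHomogeneous_det_X_pow {σ R : Type*} [CommRing R] [Fintype σ]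
    [DecidableEq σ] (α : σ → ℕ) :
    (det (of fun i j => (X i : MvPolynomial σ R) ^ α j)).IsHomogeneous (∑ j, α j) := by
  rw [det_apply']
  refine IsHomogeneous.sum _ _ _ fun τ _ => ?_
  rw [← map_intCast (C : R →+* MvPolynomial σ R), ← zero_add (∑ j, α j)]
  exact (isHomogeneous_C _ _).mul
    (IsHomogeneous.prod _ _ _ fun i _ => isHomogeneous_X_pow (τ i) (α i))

theorem generalized_vandermonde_div_general (t : ℕ)
    (α : Fin (t + 1) → ℕ) (hαmono : StrictMono α) :
    ∃ P : MvPolynomial (Fin (t + 1)) ℤ,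
      Matrix.det (Matrix.of fun i j : Fin (t + 1) => (X i : MvPolynomial (Fin (t + 1)) ℤ) ^ α j)
        = (∏ p ∈ Finset.univ.filter (fun p : Fin (t + 1) × Fin (t + 1) => p.1 < p.2),
            ((X p.2 : MvPolynomial (Fin (t + 1)) ℤ) - X p.1)) * P ∧
      P ≠ 0 ∧
      (∀ d : (Fin (t + 1)) →₀ ℕ, 0 ≤ P.coeff d) ∧
      P.IsHomogeneous ((∑ j, α j) - t * (t + 1) / 2) ∧
      (Matrix.det (Matrix.of fun i j : Fin (t + 1) =>
        (X i : MvPolynomial (Fin (t + 1)) ℤ) ^ α j)).IsHomogeneous (∑ j, α j) := by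
  have hdeg : ∑ j, (α j - j) = ∑ j, α j - t * (t + 1) / 2 := by
    rw [Fin.sum_sub_val_of_strictMono hαmono, Nat.add_sub_cancel, mul_comm]
  refine ⟨MvPolynomial.map (Nat.castRingHom ℤ) (vandermondeQuot (t + 1) α), ?_, ?_, fun d => ?_, ?_,
    isHomogeneous_det_X_pow α⟩
  · rw [← det_vandermonde_eq_prod_filter_lt, det_of_pow_eq_det_vandermonde_mul_aeval X
      hαmono.monotone, aeval_eq_eval₂Hom, map_eq_eval₂Hom_C_comp]
    congr
  · rw [Ne, ← map_zero (MvPolynomial.map (Nat.castRingHom ℤ)),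
      (MvPolynomial.map_injective _ Nat.cast_injective).eq_iff]
    exact vandermondeQuot_ne_zero hαmono
  · rw [coeff_map]
    exact Int.natCast_nonneg _
  · rw [← hdeg]
    exact (isHomogeneous_vandermondeQuot hαmono).map _

/-- Let `α : Fin (t+1) → ℕ` be strictly increasing with `α 0 = 0`
(encoding the exponent vector `0 < α₁ < ⋯ < α_t` together with the constant
column).  The standard Vandermonde determinant `V_st = ∏_{i<j} (x_j - x_i)`
divides the generalized Vandermonde determinant `V_α = det (x_i ^ α_j)` in
`ℤ[x₀,…,x_t]`, with quotient `P_α` a nonzero homogeneous polynomial of degree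
`|α| - t(t+1)/2` having nonnegative coefficients; moreover `V_α` is homogeneous
of degree `|α|`. -/
theorem generalized_vandermonde_div (t : ℕ) (ht : 1 ≤ t)
    (α : Fin (t + 1) → ℕ) (hα0 : α 0 = 0) (hαmono : StrictMono α) :
    ∃ P : MvPolynomial (Fin (t + 1)) ℤ,
      Matrix.det (Matrix.of fun i j : Fin (t + 1) => (X i : MvPolynomial (Fin (t + 1)) ℤ) ^ α j)
        = (∏ p ∈ Finset.univ.filter (fun p : Fin (t + 1) × Fin (t + 1) => p.1 < p.2),
            ((X p.2 : MvPolynomial (Fin (t + 1)) ℤ) - X p.1)) * P ∧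
      P ≠ 0 ∧
      (∀ d : (Fin (t + 1)) →₀ ℕ, 0 ≤ P.coeff d) ∧
      P.IsHomogeneous ((∑ j, α j) - t * (t + 1) / 2) ∧
      (Matrix.det (Matrix.of fun i j : Fin (t + 1) =>
        (X i : MvPolynomial (Fin (t + 1)) ℤ) ^ α j)).IsHomogeneous (∑ j, α j) :=
  generalized_vandermonde_div_general t α hαmono
end

section
/- Let t ≥ 1, let m ≥ 0 and let s = (s₀,…,s_m) be positive integers with s₀+⋯+s_m = t+1, and let st = (1,2,…,t). Then in ℤ[x₀,…,x_m] the confluent Vandermonde determinant satisfies V_st^s(x₀,…,x_m) = ∏_{0≤i<j≤m} (x_j − x_i)^{s_i s_j}. -/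
open MvPolynomial

/-- The partial sum `s₀ + ⋯ + s_{i-1}` of the multiplicity vector `s`. -/
def confluentPartialSum (m : ℕ) (s : Fin (m + 1) → ℕ) (i : ℕ) : ℕ :=
  ∑ j ∈ Finset.univ.filter (fun j : Fin (m + 1) => (j : ℕ) < i), s j

/-- The block (variable) index of the `r`-th row of the confluent Vandermonde
matrix: the largest `i ≤ m` with `s₀ + ⋯ + s_{i-1} ≤ r`. -/
def confluentBlock (m : ℕ) (s : Fin (m + 1) → ℕ) (r : ℕ) : Fin (m + 1) :=
  ⟨Nat.findGreatest (fun i => confluentPartialSum m s i ≤ r) m,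
    Nat.lt_succ_of_le (Nat.findGreatest_le m)⟩

/-- The derivative order `k` of the `r`-th row of the confluent Vandermonde
matrix: `r` minus the partial sum of the `s_j` for blocks `j` before it. -/
def confluentOffset (m : ℕ) (s : Fin (m + 1) → ℕ) (r : ℕ) : ℕ :=
  r - confluentPartialSum m s (confluentBlock m s r)

/-- The generalized confluent Vandermonde determinant `V_α^s`: the determinant
of the `(t+1) × (t+1)` matrix whose row indexed by the pair `(i, k)`
(`0 ≤ k < s_i`, rows ordered lexicographically) has entry
`binom(α_j, k) · x_i^(α_j - k)` in column `j`. -/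
noncomputable def confluentVandermonde (t m : ℕ) (s : Fin (m + 1) → ℕ) (α : Fin (t + 1) → ℕ) :
    MvPolynomial (Fin (m + 1)) ℤ :=
  Matrix.det (Matrix.of fun r c : Fin (t + 1) =>
    (C ((α c).choose (confluentOffset m s (r : ℕ)) : ℤ)) *
      (X (confluentBlock m s (r : ℕ)) : MvPolynomial (Fin (m + 1)) ℤ) ^
        (α c - confluentOffset m s (r : ℕ)))

/-!
Introduce an auxiliary variable `u_r` for every row `r` and put `v_r = x_{b(r)} + u_r`, where
`b(r)` is the block of `r` and `k_r` its offset. By the binomial theorem row `r` of the confluent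
matrix is the coefficient of `u_r ^ k_r` in row `r` of the Vandermonde matrix of `v`, so by
multilinearity `V` is the coefficient of `∏ u_r ^ k_r` in `∏_{r < r'} (v_{r'} - v_r)`.
A factor with `r, r'` in the same block is `u_{r'} - u_r`; the product of these is homogeneous of
degree `∑ k_r`, and for the lexicographic order with `u_{r'} > u_r` its leading monomial is
`∏ u_r ^ k_r`, with coefficient `1`. Hence only the constant terms `x_{b(r')} - x_{b(r)}` of the
remaining factors survive, and there are `s_i s_j` of them for each pair of blocks `i < j`.
-/

open Finset MonomialOrder

variable {R : Type*} [CommRing R]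

theorem C_add_X_pow_eq_sum {σ : Type*} (c : R) (i : σ) (e : ℕ) :
    (C c + X i : MvPolynomial σ R) ^ e =
      ∑ k ∈ range (e + 1), monomial (Finsupp.single i k) ((e.choose k : R) * c ^ (e - k)) := by
  rw [add_comm, add_pow]
  refine sum_congr rfl fun k _ => ?_
  rw [X_pow_eq_monomial, ← C_pow, ← map_natCast C, mul_assoc, ← map_mul, mul_comm, C_mul_monomial,
    mul_one, mul_comm (c ^ _)]

theorem coeff_prod_C_add_X_pow {ι : Type*} [Fintype ι] (a : ι → R) (e : ι → ℕ) (d : ι →₀ ℕ) :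
    coeff d (∏ i, (C (a i) + X i : MvPolynomial ι R) ^ e i) =
      ∏ i, ((e i).choose (d i) : R) * a i ^ (e i - d i) := by
  classical
  simp_rw [C_add_X_pow_eq_sum, prod_univ_sum, ← monomial_sum_prod, coeff_sum, coeff_monomial]
  have hd : ∑ i, Finsupp.single i (d i) = d := Finsupp.univ_sum_single d
  rw [sum_eq_single (⇑d)]
  · rw [if_pos hd]
  · intro κ _ hκ
    rw [if_neg]
    intro h
    exact hκ (by ext i; simpa [Finsupp.single_apply] using DFunLike.congr_fun h i)
  · intro hd_notMem
    rw [if_pos hd]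
    obtain ⟨i, hi⟩ : ∃ i, e i < d i := by simpa [Fintype.mem_piFinset] using hd_notMem
    exact prod_eq_zero (mem_univ i) (by simp [Nat.choose_eq_zero_of_lt hi])

theorem det_choose_mul_pow_eq_coeff_det {ι : Type*} [Fintype ι] [DecidableEq ι] (a : ι → R)
    (e k : ι → ℕ) :
    (Matrix.of fun r c => ((e c).choose (k r) : R) * a r ^ (e c - k r)).det =
      coeff (Finsupp.equivFunOnFinite.symm k)
        (Matrix.of fun r c => (C (a r) + X r : MvPolynomial ι R) ^ e c).det := by
  rw [← Matrix.det_transpose, Matrix.det_apply, ← Matrix.det_transpose, Matrix.det_apply,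
    coeff_sum]
  refine sum_congr rfl fun σ _ => ?_
  simp only [Units.smul_def, coeff_smul, Matrix.transpose_apply, Matrix.of_apply]
  rw [coeff_prod_C_add_X_pow a (fun r => e (σ r))]
  rfl

theorem coeff_mul_of_isHomogeneous {σ : Type*} {F P : MvPolynomial σ R} {n : ℕ}
    (hP : P.IsHomogeneous n) {d : σ →₀ ℕ} (hd : d.degree = n) :
    coeff d (F * P) = constantCoeff F * coeff d P := by
  classical
  rw [coeff_mul, sum_eq_single (0, d)]
  · rfl
  · rintro ⟨e, f⟩ hef hne
    simp only [HasAntidiagonal.mem_antidiagonal] at hef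
    by_contra h
    have hf : f.degree = n := by
      by_contra hf
      exact right_ne_zero_of_mul h (hP.coeff_eq_zero hf)
    have he : e = 0 := by
      rw [← Finsupp.degree_eq_zero_iff]
      have := congrArg Finsupp.degree hef
      rw [map_add] at this
      omega
    exact hne (by simp_all)
  · simp

theorem MonomialOrder.coeff_sum_single_prod_X_sub_X {σ ι : Type*} (m : MonomialOrder σ)
    (Q : Finset ι) (lo hi : ι → σ)
    (hQ : ∀ q ∈ Q, Finsupp.single (lo q) 1 ≺[m] Finsupp.single (hi q) 1) :
    coeff (∑ q ∈ Q, Finsupp.single (hi q) 1)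
      (∏ q ∈ Q, (X (hi q) - X (lo q) : MvPolynomial σ R)) = 1 := by
  nontriviality R
  have hlt : ∀ q ∈ Q,
      m.degree (X (lo q) : MvPolynomial σ R) ≺[m] m.degree (X (hi q) : MvPolynomial σ R) := by
    intro q hq
    rw [m.degree_X, m.degree_X]
    exact hQ q hq
  have hdeg : ∀ q ∈ Q,
      m.degree (X (hi q) - X (lo q) : MvPolynomial σ R) = Finsupp.single (hi q) 1 :=
    fun q hq => (m.degree_sub_of_lt (hlt q hq)).trans m.degree_X
  have hlc : ∀ q ∈ Q, m.leadingCoeff (X (hi q) - X (lo q) : MvPolynomial σ R) = 1 :=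
    fun q hq => (m.leadingCoeff_sub_of_lt (hlt q hq)).trans m.leadingCoeff_X
  rw [← sum_congr rfl hdeg, m.coeff_prod_sum_degree, prod_eq_one hlc]

theorem coeff_sum_single_prod_X_sub_X_of_lt {σ ι : Type*} [LinearOrder σ] [WellFoundedLT σ]
    (Q : Finset ι) (lo hi : ι → σ) (hQ : ∀ q ∈ Q, lo q < hi q) :
    coeff (∑ q ∈ Q, Finsupp.single (hi q) 1)
      (∏ q ∈ Q, (X (hi q) - X (lo q) : MvPolynomial σ R)) = 1 :=
  -- Mathlib's lexicographic order ranks smaller variables higher, hence the order dual.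
  (MonomialOrder.lex : MonomialOrder σᵒᵈ).coeff_sum_single_prod_X_sub_X Q lo hi fun q hq =>
    MonomialOrder.lex_lt_iff.mpr (Finsupp.Lex.single_lt_iff.mpr (hQ q hq))

theorem Fin.card_filter_le_val_and_val_lt {n lo hi : ℕ} (h : hi ≤ n) :
    #{r : Fin n | lo ≤ r ∧ (r : ℕ) < hi} = hi - lo := by
  rw [← Nat.card_Ico, ← card_map Fin.valEmbedding]
  congr 1
  ext j
  simp only [mem_map, mem_filter, mem_univ, true_and, Fin.valEmbedding_apply, mem_Ico]
  exact ⟨fun ⟨r, hr, hrj⟩ => hrj ▸ hr, fun hj => ⟨⟨j, by omega⟩, hj, rfl⟩⟩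

theorem prod_prod_Ioi_eq_prod_filter_lt {α M : Type*} [Fintype α] [LinearOrder α]
    [LocallyFiniteOrderTop α] [CommMonoid M] (f : α × α → M) :
    ∏ i, ∏ j ∈ Ioi i, f (i, j) = ∏ p : α × α with p.1 < p.2, f p := by
  rw [prod_filter, Fintype.prod_prod_type]
  refine prod_congr rfl fun i _ => ?_
  rw [← filter_lt_eq_Ioi, prod_filter]

theorem prod_filter_lt_ne_of_monotone {α β M : Type*} [Fintype α] [LinearOrder α] [Fintype β]
    [LinearOrder β] [CommMonoid M] {b : α → β} (hb : Monotone b) (f : β → β → M) :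
    ∏ p : α × α with p.1 < p.2 ∧ b p.1 ≠ b p.2, f (b p.1) (b p.2) =
      ∏ q : β × β with q.1 < q.2, f q.1 q.2 ^ (#{r | b r = q.1} * #{r | b r = q.2}) := by
  set cross : Finset (α × α) := {p | p.1 < p.2 ∧ b p.1 ≠ b p.2}
  have hmaps : ∀ p ∈ cross, (b p.1, b p.2) ∈ ({q : β × β | q.1 < q.2} : Finset _) := by
    simp only [cross, mem_filter, mem_univ, true_and]
    exact fun p hp => (hb hp.1.le).lt_of_ne hp.2
  rw [← prod_fiberwise_of_maps_to hmaps]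
  refine prod_congr rfl fun q hq => ?_
  have hfiber : ({p ∈ cross | (b p.1, b p.2) = q} : Finset (α × α)) =
      ({r | b r = q.1} : Finset α) ×ˢ ({r | b r = q.2} : Finset α) := by
    ext ⟨i, j⟩
    simp only [cross, mem_filter, mem_univ, true_and, mem_product, Prod.ext_iff] at hq ⊢
    constructor
    · exact fun h => h.2
    · rintro ⟨hi, hj⟩
      refine ⟨⟨lt_of_not_ge fun hji => (hb hji).not_gt (hi ▸ hj ▸ hq), ?_⟩, hi, hj⟩
      rw [hi, hj]
      exact hq.ne
  have hconst : ∀ p ∈ ({p ∈ cross | (b p.1, b p.2) = q} : Finset (α × α)),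
      f (b p.1) (b p.2) = f q.1 q.2 := by
    intro p hp
    rw [← (mem_filter.mp hp).2]
  rw [prod_congr rfl hconst, prod_const, hfiber, card_product]

theorem sum_single_snd_filter_eq_card {n : ℕ} {β : Type*} [DecidableEq β] (b : Fin n → β) :
    ∑ p : Fin n × Fin n with p.1 < p.2 ∧ b p.1 = b p.2, Finsupp.single p.2 1 =
      Finsupp.equivFunOnFinite.symm fun r => #{i | i < r ∧ b i = b r} := by
  ext r
  rw [Finsupp.finsetSum_apply, Finsupp.coe_equivFunOnFinite_symm]
  simp only [Finsupp.single_apply, sum_boole, Nat.cast_id]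
  refine card_nbij' Prod.fst (fun i => (i, r)) ?_ ?_ ?_ ?_ <;>
    simp +contextual [Set.MapsTo, Set.LeftInvOn, Set.RightInvOn, eq_comm]

theorem coeff_det_vandermonde_C_add_X {n : ℕ} {β : Type*} [DecidableEq β] (b : Fin n → β)
    (x : β → R) :
    coeff (Finsupp.equivFunOnFinite.symm fun r => #{i | i < r ∧ b i = b r})
        (Matrix.vandermonde fun r => C (x (b r)) + X r).det =
      ∏ p : Fin n × Fin n with p.1 < p.2 ∧ b p.1 ≠ b p.2, (x (b p.2) - x (b p.1)) := by
  rw [Matrix.det_vandermonde, prod_prod_Ioi_eq_prod_filter_lt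
      (fun p => C (x (b p.2)) + X p.2 - (C (x (b p.1)) + X p.1)),
    ← prod_filter_mul_prod_filter_not _ fun p => b p.1 ≠ b p.2, filter_filter, filter_filter]
  set same : Finset (Fin n × Fin n) := {p | p.1 < p.2 ∧ b p.1 = b p.2}
  have hsame : ∏ p : Fin n × Fin n with p.1 < p.2 ∧ ¬b p.1 ≠ b p.2,
      (C (x (b p.2)) + X p.2 - (C (x (b p.1)) + X p.1) : MvPolynomial (Fin n) R) =
        ∏ p ∈ same, (X p.2 - X p.1) := by
    simp only [not_not]
    refine prod_congr rfl fun p hp => ?_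
    rw [(mem_filter.mp hp).2.2]
    ring
  have hhom : (∏ p ∈ same, (X p.2 - X p.1 : MvPolynomial (Fin n) R)).IsHomogeneous #same := by
    simpa using IsHomogeneous.prod same _ (fun _ => 1) fun p _ =>
      (isHomogeneous_X R p.2).sub (isHomogeneous_X R p.1)
  rw [hsame, ← sum_single_snd_filter_eq_card, coeff_mul_of_isHomogeneous hhom (by simp [same]),
    coeff_sum_single_prod_X_sub_X_of_lt same Prod.fst Prod.snd fun p hp => (mem_filter.mp hp).2.1,
    mul_one, map_prod]
  simp

section Blocks

variable {m : ℕ} (s : Fin (m + 1) → ℕ)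

theorem confluentPartialSum_zero : confluentPartialSum m s 0 = 0 := by
  simp [confluentPartialSum]

theorem monotone_confluentPartialSum : Monotone (confluentPartialSum m s) :=
  fun _ _ h => sum_le_sum_of_subset fun j => by
    simp only [mem_filter, mem_univ, true_and]
    omega

theorem confluentPartialSum_succ (i : Fin (m + 1)) :
    confluentPartialSum m s (i + 1) = confluentPartialSum m s i + s i := by
  rw [confluentPartialSum, confluentPartialSum, add_comm (∑ _ ∈ _, _), ← sum_insert (by simp)]
  congr 1
  ext j
  simp [le_iff_eq_or_lt, Fin.ext_iff]

theorem confluentPartialSum_last : confluentPartialSum m s (m + 1) = ∑ j, s j := by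
  simp [confluentPartialSum, Fin.is_le]

theorem monotone_confluentBlock : Monotone (confluentBlock m s) :=
  fun _ _ h => Fin.mk_le_mk.mpr (Nat.findGreatest_mono (fun _ hi => hi.trans h) le_rfl)

theorem confluentBlock_eq_iff {r : ℕ} (hr : r < ∑ j, s j) (i : Fin (m + 1)) :
    confluentBlock m s r = i ↔
      confluentPartialSum m s i ≤ r ∧ r < confluentPartialSum m s i + s i := by
  rw [confluentBlock, Fin.ext_iff, Fin.val_mk, Nat.findGreatest_eq_iff,
    ← confluentPartialSum_succ]
  constructor
  · rintro ⟨-, hle, hgt⟩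
    refine ⟨?_, ?_⟩
    · rcases eq_or_ne (i : ℕ) 0 with hi | hi
      · simp [hi, confluentPartialSum_zero]
      · exact hle hi
    · rcases eq_or_ne (i : ℕ) m with hi | hi
      · rwa [hi, confluentPartialSum_last]
      · exact not_le.mp (hgt (Nat.lt_succ_self _) (by omega))
  · rintro ⟨hle, hlt⟩
    exact ⟨Fin.is_le i, fun _ => hle,
      fun j hij _ => not_le.mpr (hlt.trans_le (monotone_confluentPartialSum s hij))⟩

variable {s} {t : ℕ} (hs : ∑ j, s j = t + 1)
include hs

theorem confluentBlock_fin_eq_iff (r : Fin (t + 1)) (i : Fin (m + 1)) :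
    confluentBlock m s r = i ↔
      confluentPartialSum m s i ≤ r ∧ (r : ℕ) < confluentPartialSum m s i + s i :=
  confluentBlock_eq_iff s (hs.symm ▸ r.isLt) i

theorem card_confluentBlock_eq (i : Fin (m + 1)) :
    #{r : Fin (t + 1) | confluentBlock m s r = i} = s i := by
  have hle : confluentPartialSum m s i + s i ≤ t + 1 := by
    rw [← confluentPartialSum_succ, ← hs, ← confluentPartialSum_last]
    exact monotone_confluentPartialSum s (by omega)
  simp only [confluentBlock_fin_eq_iff hs, Fin.card_filter_le_val_and_val_lt hle,
    Nat.add_sub_cancel_left]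

theorem confluentOffset_eq_card (r : Fin (t + 1)) :
    confluentOffset m s r =
      #{i : Fin (t + 1) | i < r ∧ confluentBlock m s i = confluentBlock m s r} := by
  have hr := (confluentBlock_fin_eq_iff hs r _).mp rfl
  have hiff : ∀ i : Fin (t + 1), i < r ∧ confluentBlock m s i = confluentBlock m s r ↔
      confluentPartialSum m s (confluentBlock m s r) ≤ i ∧ (i : ℕ) < r := fun i => by
    rw [confluentBlock_fin_eq_iff hs, Fin.lt_def]
    omega
  simp only [hiff, Fin.card_filter_le_val_and_val_lt r.isLt.le, confluentOffset]

end Blocks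

theorem confluentVandermonde_st_general (t m : ℕ) (s : Fin (m + 1) → ℕ) (hs : ∑ i, s i = t + 1) :
    confluentVandermonde t m s (fun j => (j : ℕ)) =
      ∏ p ∈ Finset.univ.filter (fun p : Fin (m + 1) × Fin (m + 1) => p.1 < p.2),
        ((X p.2 : MvPolynomial (Fin (m + 1)) ℤ) - X p.1) ^ (s p.1 * s p.2) := by
  set b : Fin (t + 1) → Fin (m + 1) := fun r => confluentBlock m s r
  have hb : Monotone b := (monotone_confluentBlock s).comp Fin.val_strictMono.monotone
  have hV : confluentVandermonde t m s (fun j => (j : ℕ)) =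
      (Matrix.of fun r c : Fin (t + 1) => (((c : ℕ).choose #{i | i < r ∧ b i = b r} : ℕ) :
        MvPolynomial (Fin (m + 1)) ℤ) * X (b r) ^ ((c : ℕ) - #{i | i < r ∧ b i = b r})).det := by
    simp [confluentVandermonde, confluentOffset_eq_card hs, b]
  rw [hV, det_choose_mul_pow_eq_coeff_det (fun r => X (b r)) (fun c => (c : ℕ)),
    ← Matrix.vandermonde, coeff_det_vandermonde_C_add_X b X,
    prod_filter_lt_ne_of_monotone hb fun i j => (X j - X i : MvPolynomial (Fin (m + 1)) ℤ)]
  simp only [b, card_confluentBlock_eq hs]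

/-- For `st = (0,1,…,t)` and positive multiplicities `s` with
`s₀ + ⋯ + s_m = t + 1`, the confluent Vandermonde determinant factors as
`V_st^s = ∏_{i<j} (x_j - x_i)^(s_i s_j)`. -/
theorem confluentVandermonde_st (t m : ℕ) (ht : 1 ≤ t) (s : Fin (m + 1) → ℕ)
    (hspos : ∀ i, 0 < s i) (hs : ∑ i, s i = t + 1) :
    confluentVandermonde t m s (fun j => (j : ℕ)) =
      ∏ p ∈ Finset.univ.filter (fun p : Fin (m + 1) × Fin (m + 1) => p.1 < p.2),
        ((X p.2 : MvPolynomial (Fin (m + 1)) ℤ) - X p.1) ^ (s p.1 * s p.2) :=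
  confluentVandermonde_st_general t m s hs
end

section
/- Let t ≥ 1 and let α = (α₁,…,α_t) ∈ ℕ^t with 0 < α₁ < ⋯ < α_t. Then in ℤ[x₀,…,x_t] one has the identity V_α(1+x₀,…,1+x_t) = Σ_{1 ≤ β₁ < ⋯ < β_t ≤ α_t} det( binom(α_i, β_j) )_{1≤i,j≤t} · V_β(x₀,…,x_t), where the sum ranges over all strictly increasing tuples β = (β₁,…,β_t) of positive integers (only finitely many terms are nonzero, since the binomial-coefficient determinant vanishes once β_t > α_t). -/
open MvPolynomial
open scoped Classical

/-!
Since `(1 + x) ^ a = ∑ k, a.choose k * x ^ k`, the matrix `((1 + x i) ^ α j)` factors as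
`(x i ^ k)_{i,k} * (α j.choose k)_{k,j}` with `k ≤ α_t`, and the Cauchy–Binet formula expands its
determinant over the strictly increasing `β`. As `α 0 = 0`, column `0` of the binomial factor
is the unit vector `e₀`: every minor with `β 0 ≠ 0` vanishes, and for `β 0 = 0` the minor reduces
to the `t × t` block `(binom(α_i, β_j))_{1 ≤ i, j ≤ t}`.
-/

open Matrix Finset

theorem Tuple.sort_comp_perm_of_strictMono {m : ℕ} {α : Type*} [LinearOrder α] {f : Fin m → α}
    (hf : StrictMono f) (σ : Equiv.Perm (Fin m)) : Tuple.sort (f ∘ σ) = σ⁻¹ := by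
  refine (Tuple.eq_sort_iff.2 ⟨?_, fun i j hij hfij => ?_⟩).symm
  · simpa [Function.comp_assoc] using hf.monotone
  · exact absurd (by simpa using hf.injective hfij) hij.ne

namespace Matrix

variable {R : Type*} [CommRing R]

theorem det_mul_eq_sum_prod_mul_det_submatrix {n κ : Type*} [Fintype n] [DecidableEq n]
    [Fintype κ] (B : Matrix n κ R) (C : Matrix κ n R) :
    (B * C).det = ∑ r : n → κ, (∏ i, B i (r i)) * (C.submatrix r id).det := by
  have h : (B * C).det = (detRowAlternating : (n → R) [⋀^n]→ₗ[R] R).toMultilinearMap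
      (fun i => ∑ k, B i k • C k) := by
    congr 1
    ext i j
    simp [mul_apply]
  rw [h, MultilinearMap.map_sum]
  refine sum_congr rfl fun r _ => ?_
  rw [MultilinearMap.map_smul_univ, smul_eq_mul]
  rfl

theorem det_mul_eq_sum_det_submatrix_mul_det_submatrix {m : ℕ} {κ : Type*} [Fintype κ]
    [LinearOrder κ] (B : Matrix (Fin m) κ R) (C : Matrix κ (Fin m) R) :
    (B * C).det = ∑ f ∈ univ.filter (StrictMono : (Fin m → κ) → Prop),
      (B.submatrix id f).det * (C.submatrix f id).det := by
  rw [det_mul_eq_sum_prod_mul_det_submatrix, ← sum_filter_of_ne (p := Function.Injective)]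
  swap
  · intro r _ hr
    by_contra hinj
    obtain ⟨i, j, hrij, hij⟩ := Function.not_injective_iff.1 hinj
    exact hr (by rw [det_zero_of_row_eq hij (by ext; simp [hrij]), mul_zero])
  calc ∑ r ∈ univ.filter Function.Injective, (∏ i, B i (r i)) * (C.submatrix r id).det
      = ∑ p ∈ univ.filter (StrictMono : (Fin m → κ) → Prop) ×ˢ (univ : Finset (Equiv.Perm _)),
          (∏ i, B i (p.1 (p.2 i))) * (C.submatrix (p.1 ∘ p.2) id).det := by
        -- an injective `r` is uniquely `f ∘ σ` with `f` strictly monotone: sort it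
        refine (sum_nbij' (fun p : (Fin m → κ) × Equiv.Perm (Fin m) => p.1 ∘ p.2)
          (fun r => (r ∘ Tuple.sort r, (Tuple.sort r)⁻¹)) ?_ ?_ ?_ ?_ fun _ _ => rfl).symm
        · rintro ⟨f, σ⟩ hp
          simp only [mem_product, mem_filter, mem_univ, true_and, and_true] at hp ⊢
          exact hp.injective.comp σ.injective
        · intro r hr
          simp only [mem_product, mem_filter, mem_univ, true_and, and_true] at hr ⊢
          exact (Tuple.monotone_sort r).strictMono_of_injective (hr.comp (Equiv.injective _))
        · rintro ⟨f, σ⟩ hp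
          simp only [mem_product, mem_filter, mem_univ, true_and, and_true] at hp
          simp [Tuple.sort_comp_perm_of_strictMono hp, Function.comp_assoc]
        · intro r _
          simp [Function.comp_assoc]
    _ = ∑ f ∈ univ.filter (StrictMono : (Fin m → κ) → Prop), ∑ σ : Equiv.Perm (Fin m),
          (Equiv.Perm.sign σ : R) * (∏ i, B i (f (σ i))) * (C.submatrix f id).det := by
        rw [sum_product]
        refine sum_congr rfl fun f _ => sum_congr rfl fun σ _ => ?_
        rw [show C.submatrix (f ∘ σ) id = (C.submatrix f id).submatrix σ id from rfl, det_permute]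
        ring
    _ = _ := by
        refine sum_congr rfl fun f _ => ?_
        have hB : (B.submatrix id f).det = ∑ σ : Equiv.Perm (Fin m),
            (Equiv.Perm.sign σ : R) * ∏ i, B i (f (σ i)) := by
          rw [← det_transpose, det_apply']
          rfl
        rw [hB, sum_mul]

theorem det_succ_eq_mul_det_submatrix_of_row_zero {n : ℕ}
    (A : Matrix (Fin (n + 1)) (Fin (n + 1)) R) (h : ∀ j : Fin n, A 0 j.succ = 0) :
    A.det = A 0 0 * (A.submatrix Fin.succ Fin.succ).det := by
  rw [det_succ_row_zero, Fin.sum_univ_succ]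
  simp [h]

theorem of_one_add_pow_eq_mul {S : Type*} [CommSemiring S] {ι n : Type*} (x : ι → S)
    (a : n → ℕ) {N : ℕ} (ha : ∀ j, a j < N) :
    of (fun i j => (1 + x i) ^ a j)
      = of (fun i (k : Fin N) => x i ^ (k : ℕ)) * of fun (k : Fin N) j => ((a j).choose k : S) := by
  ext i j
  rw [mul_apply, of_apply, add_comm, add_pow,
    sum_subset (range_subset_range.2 (ha j)) fun k _ hk => ?_]
  · simp [Fin.sum_univ_eq_sum_range (fun k => x i ^ k * ((a j).choose k : S))]
  · simp [Nat.choose_eq_zero_of_lt (by simpa using hk : a j < k)]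

theorem det_of_choose_eq_det_of_choose_succ {t : ℕ} (a b : Fin (t + 1) → ℕ) (ha : a 0 = 0)
    (hb0 : b 0 = 0) (hb : ∀ j : Fin t, b j.succ ≠ 0) :
    (of fun i j => ((a i).choose (b j) : R)).det
      = (of fun i j : Fin t => ((a i.succ).choose (b j.succ) : R)).det := by
  rw [det_succ_eq_mul_det_submatrix_of_row_zero _ fun j => by
    simp [ha, Nat.choose_eq_zero_of_lt (Nat.pos_of_ne_zero (hb j))]]
  simp only [of_apply, ha, hb0, Nat.choose_self, Nat.cast_one, one_mul]
  rfl

theorem det_of_one_add_pow_eq_sum {t : ℕ} (x : Fin (t + 1) → R) (α : Fin (t + 1) → ℕ)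
    (hα0 : α 0 = 0) (hα : StrictMono α) :
    (of fun i j => (1 + x i) ^ α j).det
      = ∑ β ∈ (univ : Finset (Fin (t + 1) → Fin (α (Fin.last t) + 1))).filter
          (fun β => (β 0 : ℕ) = 0 ∧ StrictMono fun j => (β j : ℕ)),
          ((of fun i j : Fin t => ((α i.succ).choose (β j.succ : ℕ) : ℤ)).det : R) *
            (of fun i j => x i ^ (β j : ℕ)).det := by
  rw [of_one_add_pow_eq_mul x α (N := α (Fin.last t) + 1)
      fun j => Nat.lt_succ_of_le (hα.monotone (Fin.le_last j)),
    det_mul_eq_sum_det_submatrix_mul_det_submatrix]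
  set V : Matrix (Fin (t + 1)) (Fin (α (Fin.last t) + 1)) R := of fun i k => x i ^ (k : ℕ)
  set Cm : Matrix (Fin (α (Fin.last t) + 1)) (Fin (t + 1)) R := of fun k j => ((α j).choose k : R)
  have hvanish : ∀ β ∈ univ.filter (StrictMono : (Fin (t + 1) → Fin (α (Fin.last t) + 1)) → Prop),
      (V.submatrix id β).det * (Cm.submatrix β id).det ≠ 0 → β 0 = 0 := by
    intro β hβ hne
    by_contra h0
    refine hne (mul_eq_zero_of_right _ (det_eq_zero_of_column_eq_zero 0 fun k => ?_))
    have : 0 < (β k : ℕ) := (Nat.pos_of_ne_zero (Fin.val_ne_iff.2 h0)).trans_le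
      ((mem_filter.1 hβ).2.monotone (Fin.zero_le k))
    simp [Cm, hα0, Nat.choose_eq_zero_of_lt this]
  rw [← sum_filter_of_ne hvanish, filter_filter]
  refine sum_congr (filter_congr fun β _ =>
    and_comm.trans (and_congr Fin.val_eq_zero_iff.symm Iff.rfl)) fun β hβ => ?_
  obtain ⟨hβ0, hβ⟩ := (mem_filter.1 hβ).2
  have hβpos : ∀ j : Fin t, (β j.succ : ℕ) ≠ 0 := fun j =>
    Nat.pos_iff_ne_zero.1 (hβ0 ▸ hβ (Fin.succ_pos j))
  rw [mul_comm, Int.cast_det,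
    show Cm.submatrix β id = (of fun i j => ((α i).choose (β j : ℕ) : R))ᵀ from rfl,
    det_transpose, det_of_choose_eq_det_of_choose_succ α (fun j => β j) hα0 hβ0 hβpos]
  congr 2
  ext i j
  simp

end Matrix

theorem vandermonde_shift_expansion_general (t : ℕ)
    (α : Fin (t + 1) → ℕ) (hα0 : α 0 = 0) (hαmono : StrictMono α) :
    bind₁ (fun i : Fin (t + 1) => (1 : MvPolynomial (Fin (t + 1)) ℤ) + X i)
      (Matrix.det (Matrix.of fun i j : Fin (t + 1) =>
        (X i : MvPolynomial (Fin (t + 1)) ℤ) ^ α j))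
    = ∑ β ∈ (Finset.univ : Finset (Fin (t + 1) → Fin (α (Fin.last t) + 1))).filter
        (fun β => (β 0 : ℕ) = 0 ∧ StrictMono fun j => (β j : ℕ)),
        C (Matrix.det (Matrix.of fun i j : Fin t =>
            ((α i.succ).choose (β j.succ : ℕ) : ℤ))) *
          Matrix.det (Matrix.of fun i j : Fin (t + 1) =>
            (X i : MvPolynomial (Fin (t + 1)) ℤ) ^ (β j : ℕ)) := by
  simp only [AlgHom.map_det, eq_intCast C]
  convert Matrix.det_of_one_add_pow_eq_sum X α hα0 hαmono using 2
  ext i j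
  simp

/-- Let `α : Fin (t+1) → ℕ` be strictly increasing with `α 0 = 0`
(encoding exponents `0 < α₁ < ⋯ < α_t`).  Substituting `1 + x_i` for `x_i` in the
generalized Vandermonde determinant `V_α = det (x_i ^ α_j)` gives
`V_α(1+x₀,…,1+x_t) = Σ_β det(binom(α_i, β_j))_{1≤i,j≤t} · V_β(x₀,…,x_t)`,
the sum being over all strictly increasing tuples `1 ≤ β₁ < ⋯ < β_t ≤ α_t`
(encoded as strictly monotone `β : Fin (t+1) → {0,…,α_t}` with `β 0 = 0`). -/
theorem vandermonde_shift_expansion (t : ℕ) (ht : 1 ≤ t)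
    (α : Fin (t + 1) → ℕ) (hα0 : α 0 = 0) (hαmono : StrictMono α) :
    bind₁ (fun i : Fin (t + 1) => (1 : MvPolynomial (Fin (t + 1)) ℤ) + X i)
      (Matrix.det (Matrix.of fun i j : Fin (t + 1) =>
        (X i : MvPolynomial (Fin (t + 1)) ℤ) ^ α j))
    = ∑ β ∈ (Finset.univ : Finset (Fin (t + 1) → Fin (α (Fin.last t) + 1))).filter
        (fun β => (β 0 : ℕ) = 0 ∧ StrictMono fun j => (β j : ℕ)),
        C (Matrix.det (Matrix.of fun i j : Fin t =>
            ((α i.succ).choose (β j.succ : ℕ) : ℤ))) *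
          Matrix.det (Matrix.of fun i j : Fin (t + 1) =>
            (X i : MvPolynomial (Fin (t + 1)) ℤ) ^ (β j : ℕ)) :=
  vandermonde_shift_expansion_general t α hα0 hαmono
end

section
/- Let t ≥ 1 and let β = (β₁,…,β_t) be integers with 1 ≤ β₁ < ⋯ < β_t. Then β₁!⋯β_t! · W_β(x₁,…,x_t) lies in ℤ[x₁,…,x_t]; it is divisible in ℤ[x₁,…,x_t] by x₁⋯x_t · ∏_{1≤i<j≤t}(x_j − x_i); the quotient Q_β is a nonzero polynomial with integer coefficients; and deg W_β = β₁+⋯+β_t, so deg Q_β = β₁+⋯+β_t − t(t+1)/2. -/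
open MvPolynomial

/-- `W_β`: the determinant of the matrix with entries `binom(x_i, β_j)`, where
`binom(x, k) = x(x−1)⋯(x−k+1)/k!` is the polynomial binomial coefficient. -/
noncomputable def Wdet (t : ℕ) (β : Fin t → ℕ) : MvPolynomial (Fin t) ℚ :=
  Matrix.det (Matrix.of fun i j : Fin t =>
    C ((Nat.factorial (β j) : ℚ))⁻¹ *
      ∏ k ∈ Finset.range (β j), ((X i : MvPolynomial (Fin t) ℚ) - C (k : ℚ)))

/-!
Multiplying column `j` by `β_j!` turns `W_β` into `det (P_{β_j}(x_i))`, where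
`P_n(x) = x(x-1)⋯(x-n+1)` has integer coefficients. This determinant vanishes at `x_i = 0`
(as `P_n(0) = 0` for `n ≥ 1`) and at `x_i = x_j`, so it is divisible by each of the pairwise
coprime primes `x_i` and `x_j - x_i` of the UFD `ℤ[x₁,…,x_t]`, hence by their product. As
`P_n(x) = x^n + (lower terms)`, its homogeneous component of degree `β₁+⋯+β_t` is the generalized
Vandermonde determinant `det (x_i^{β_j})`, in which `x₁^{β₁}⋯x_t^{β_t}` has coefficient `1`
because the `β_j` are distinct; this gives the degrees.
-/

open Finset

theorem isRelPrime_of_map_eq_zero {A B F : Type*} [CommMonoidWithZero A] [CommMonoidWithZero B]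
    [FunLike F A B] [MonoidWithZeroHomClass F A B] (φ : F) {p q : A} (hp : Irreducible p)
    (hφp : φ p = 0) (hφq : φ q ≠ 0) : IsRelPrime p q :=
  hp.isRelPrime_iff_not_dvd.2 fun h => hφq (zero_dvd_iff.1 (hφp ▸ map_dvd φ h))

namespace Matrix

variable {n R : Type*} [Fintype n] [DecidableEq n] [CommRing R]

theorem dvd_det_of_dvd_row (M : Matrix n n R) (i : n) {c : R} (h : ∀ j, c ∣ M i j) :
    c ∣ M.det := by
  choose v hv using h
  rw [← updateRow_eq_self M i, show M i = c • v from funext hv, det_updateRow_smul]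
  exact dvd_mul_right _ _

theorem sub_dvd_det_of_eval (x : n → R) (p : n → Polynomial R) {a b : n} (hab : a ≠ b) :
    x a - x b ∣ (of fun i j => (p j).eval (x i)).det := by
  rw [← det_updateRow_add_smul_self _ hab (-1)]
  refine dvd_det_of_dvd_row _ a fun j => ?_
  simpa [← sub_eq_add_neg] using Polynomial.sub_dvd_eval_sub (x a) (x b) (p j)

theorem dvd_det_of_eval (x : n → R) (p : n → Polynomial R) (i : n)
    (hp : ∀ j, (p j).eval 0 = 0) : x i ∣ (of fun i j => (p j).eval (x i)).det :=
  dvd_det_of_dvd_row _ i fun j => by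
    simpa [hp] using Polynomial.sub_dvd_eval_sub (x i) 0 (p j)

end Matrix

namespace MvPolynomial

section Homogeneous

variable {σ R : Type*} [CommRing R]

theorem le_totalDegree_of_homogeneousComponent_ne_zero {p : MvPolynomial σ R} {n : ℕ}
    (h : homogeneousComponent n p ≠ 0) : n ≤ p.totalDegree :=
  not_lt.1 fun hlt => h (homogeneousComponent_eq_zero n p hlt)

theorem homogeneousComponent_mul_of_totalDegree_le {p q : MvPolynomial σ R} {m n : ℕ}
    (hp : p.totalDegree ≤ m) (hq : q.totalDegree ≤ n) :
    homogeneousComponent (m + n) (p * q) =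
      homogeneousComponent m p * homogeneousComponent n q := by
  classical
  ext e
  simp only [coeff_homogeneousComponent, coeff_mul]
  split_ifs with he
  · refine sum_congr rfl fun x hx => ?_
    have hdeg : x.1.degree + x.2.degree = m + n := by
      rw [← map_add, mem_antidiagonal.1 hx, he]
    by_cases h1 : x.1.degree = m
    · rw [if_pos h1, if_pos (by omega)]
    rw [if_neg h1, zero_mul]
    rcases lt_or_gt_of_ne h1 with h1 | h1
    · rw [coeff_eq_zero_of_totalDegree_lt (show q.totalDegree < x.2.degree by omega), mul_zero]
    · rw [coeff_eq_zero_of_totalDegree_lt (show p.totalDegree < x.1.degree by omega), zero_mul]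
  · refine (sum_eq_zero fun x hx => ?_).symm
    have hdeg : x.1.degree + x.2.degree = e.degree := by
      rw [← map_add, mem_antidiagonal.1 hx]
    split_ifs <;> first | omega | simp

theorem homogeneousComponent_prod_of_totalDegree_le {ι : Type*} (s : Finset ι)
    (f : ι → MvPolynomial σ R) (d : ι → ℕ) (h : ∀ i ∈ s, (f i).totalDegree ≤ d i) :
    homogeneousComponent (∑ i ∈ s, d i) (∏ i ∈ s, f i) =
      ∏ i ∈ s, homogeneousComponent (d i) (f i) := by
  classical
  induction s using Finset.induction_on with
  | empty => simp
  | insert a s ha ih =>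
    rw [prod_insert ha, prod_insert ha, sum_insert ha,
      homogeneousComponent_mul_of_totalDegree_le (h a (mem_insert_self a s))
        ((totalDegree_finsetProd _ _).trans (sum_le_sum fun i hi => h i (mem_insert_of_mem hi))),
      ih fun i hi => h i (mem_insert_of_mem hi)]

theorem totalDegree_X_sub_natCast_le (i : σ) (k : ℕ) :
    (X i - (k : MvPolynomial σ R)).totalDegree ≤ 1 := by
  rw [← C_eq_coe_nat]
  exact (totalDegree_sub_C_le _ _).trans (isHomogeneous_X R i).totalDegree_le

theorem homogeneousComponent_one_X_sub_natCast (i : σ) (k : ℕ) :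
    homogeneousComponent 1 (X i - (k : MvPolynomial σ R)) = X i := by
  rw [← C_eq_coe_nat, map_sub, homogeneousComponent_eq_self (isHomogeneous_X R i),
    homogeneousComponent_eq_zero _ _ (by rw [totalDegree_C]; exact one_pos), sub_zero]

theorem totalDegree_eval_descPochhammer_le (i : σ) (n : ℕ) :
    ((descPochhammer (MvPolynomial σ R) n).eval (X i)).totalDegree ≤ n := by
  rw [descPochhammer_eval_eq_prod_range]
  refine (totalDegree_finsetProd _ _).trans ?_
  simpa using sum_le_sum fun k (_ : k ∈ range n) => totalDegree_X_sub_natCast_le (R := R) i k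

theorem homogeneousComponent_eval_descPochhammer (i : σ) (n : ℕ) :
    homogeneousComponent n ((descPochhammer (MvPolynomial σ R) n).eval (X i)) = X i ^ n := by
  rw [descPochhammer_eval_eq_prod_range]
  convert homogeneousComponent_prod_of_totalDegree_le (range n) _ (fun _ => 1)
    fun k _ => totalDegree_X_sub_natCast_le i k using 1
  · simp
  · rw [prod_congr rfl fun k _ => homogeneousComponent_one_X_sub_natCast i k, prod_const,
      card_range]

section Det

variable {n : Type*} [Fintype n] [DecidableEq n] {M : Matrix n n (MvPolynomial σ R)} {d : n → ℕ}

theorem totalDegree_det_le (h : ∀ i j, (M i j).totalDegree ≤ d j) :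
    M.det.totalDegree ≤ ∑ j, d j := by
  rw [Matrix.det_apply]
  exact totalDegree_finsetSum_le fun τ _ => (totalDegree_smul_le _ _).trans <|
    (totalDegree_finsetProd _ _).trans (sum_le_sum fun j _ => h _ j)

theorem homogeneousComponent_det (h : ∀ i j, (M i j).totalDegree ≤ d j) :
    homogeneousComponent (∑ j, d j) M.det =
      (Matrix.of fun i j => homogeneousComponent (d j) (M i j)).det := by
  simp only [Matrix.det_apply, map_sum, Units.smul_def, map_zsmul, Matrix.of_apply]
  exact sum_congr rfl fun τ _ => by
    rw [homogeneousComponent_prod_of_totalDegree_le _ _ _ fun j _ => h _ j]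

omit [DecidableEq n] in
theorem prod_X_pow_eq_monomial_equivFunOnFinite (c : n → ℕ) :
    ∏ i, (X i : MvPolynomial n R) ^ c i = monomial (Finsupp.equivFunOnFinite.symm c) 1 := by
  rw [monomial_eq, C_1, one_mul, Finsupp.prod_fintype _ _ (fun _ => pow_zero _)]
  rfl

theorem coeff_det_X_pow {β : n → ℕ} (hβ : Function.Injective β) :
    coeff (Finsupp.equivFunOnFinite.symm β)
      (Matrix.of fun i j => (X i : MvPolynomial n R) ^ β j).det = 1 := by
  have hterm (τ : Equiv.Perm n) : ∏ i, (X (τ i) : MvPolynomial n R) ^ β i =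
      monomial (Finsupp.equivFunOnFinite.symm (β ∘ τ.symm)) 1 := by
    rw [← prod_X_pow_eq_monomial_equivFunOnFinite]
    conv_rhs => rw [← Equiv.prod_comp τ]
    simp
  simp only [Matrix.det_apply, Matrix.of_apply, hterm, coeff_sum, coeff_smul, coeff_monomial,
    Finsupp.equivFunOnFinite.symm.injective.eq_iff]
  rw [sum_eq_single 1 (fun τ _ hτ => ?_) (by simp)]
  · simp [← Equiv.Perm.inv_def]
  · rw [if_neg, smul_zero]
    intro h
    refine hτ (Equiv.ext fun i => ?_)
    simpa using (congrFun (hβ.comp_left (h.trans (Function.comp_id β).symm)) (τ i)).symm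

end Det

end Homogeneous

section Factors

variable {σ R : Type*} [CommRing R] [IsDomain R]

theorem totalDegree_C_mul_of_ne_zero {a : R} (ha : a ≠ 0) (p : MvPolynomial σ R) :
    (C a * p).totalDegree = p.totalDegree := by
  rcases eq_or_ne p 0 with rfl | hp
  · simp
  · rw [totalDegree_mul_of_isDomain (C_ne_zero.2 ha) hp, totalDegree_C, zero_add]

variable [DecidableEq σ]

theorem prime_X_sub_X {a b : σ} (hab : a ≠ b) : Prime (X a - X b : MvPolynomial σ R) := by
  let e := (renameEquiv R (Equiv.optionSubtypeNe a).symm).trans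
    (optionEquivLeft R {k // k ≠ a})
  have he : e (X a - X b) = Polynomial.X - Polynomial.C (X ⟨b, hab.symm⟩) := by
    simp [e, Equiv.optionSubtypeNe_symm_of_ne hab.symm, optionEquivLeft_X_some,
      optionEquivLeft_X_none]
  rw [← MulEquiv.prime_iff e.toMulEquiv]
  exact he ▸ Polynomial.prime_X_sub_C _

theorem isRelPrime_X_X {a b : σ} (hab : a ≠ b) : IsRelPrime (X a : MvPolynomial σ R) (X b) :=
  isRelPrime_of_map_eq_zero (aeval (Function.update (X (R := R)) a 0)) X_prime.irreducible
    (by simp) (by rw [aeval_X, Function.update_of_ne hab.symm]; exact X_ne_zero b)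

theorem isRelPrime_X_sub_X_X {a b : σ} (hab : a ≠ b) (c : σ) :
    IsRelPrime (X a - X b : MvPolynomial σ R) (X c) :=
  isRelPrime_of_map_eq_zero (rename (Function.update id a b)) (prime_X_sub_X hab).irreducible
    (by simp [Function.update_of_ne hab.symm]) (by simp [X_ne_zero])

theorem isRelPrime_X_sub_X_X_sub_X {a b c d : σ} (hab : a ≠ b)
    (h : Function.update id a b c ≠ Function.update id a b d) :
    IsRelPrime (X a - X b : MvPolynomial σ R) (X c - X d) :=
  isRelPrime_of_map_eq_zero (rename (Function.update id a b)) (prime_X_sub_X hab).irreducible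
    (by simp [Function.update_of_ne hab.symm]) (by simpa [sub_eq_zero] using h)

theorem prod_X_mul_prod_X_sub_X_dvd [UniqueFactorizationMonoid R] {ι : Type*} [LinearOrder ι]
    [Fintype ι] {p : MvPolynomial ι R} (hX : ∀ i, X i ∣ p)
    (hXX : ∀ i j, i < j → X j - X i ∣ p) :
    ((∏ i, X i) * ∏ q ∈ univ.filter (fun q : ι × ι => q.1 < q.2), (X q.2 - X q.1)) ∣ p := by
  refine IsRelPrime.mul_dvd ?_
    (prod_dvd_of_isRelPrime (fun i _ j _ hij => isRelPrime_X_X hij) fun i _ => hX i)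
    (prod_dvd_of_isRelPrime (fun q hq q' hq' hqq' => ?_)
      fun q hq => hXX _ _ (mem_filter.1 hq).2)
  · exact IsRelPrime.prod_left fun i _ => IsRelPrime.prod_right fun q hq =>
      (isRelPrime_X_sub_X_X (mem_filter.1 hq).2.ne' i).symm
  · have hlt := (mem_filter.1 (mem_coe.1 hq)).2
    have hlt' := (mem_filter.1 (mem_coe.1 hq')).2
    refine isRelPrime_X_sub_X_X_sub_X hlt.ne' ?_
    simp only [Function.update_apply, id]
    have := Prod.ext_iff.not.1 hqq'
    split_ifs <;> grind

end Factors

end MvPolynomial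

theorem Fin.card_filter_fst_lt_snd (t : ℕ) :
    #(univ.filter fun q : Fin t × Fin t => q.1 < q.2) = t.choose 2 := by
  rw [card_filter, Fintype.sum_prod_type_right]
  simp only [sum_boole, Nat.cast_id, filter_gt_eq_Iio, Fin.card_Iio]
  rw [Fin.sum_univ_eq_sum_range (fun i => i) t, sum_range_id, Nat.choose_two_right]

theorem isHomogeneous_prod_X_mul_prod_X_sub_X (R : Type*) [CommRing R] (t : ℕ) :
    ((∏ i, X i) * ∏ q ∈ univ.filter (fun q : Fin t × Fin t => q.1 < q.2),
      (X q.2 - X q.1) : MvPolynomial (Fin t) R).IsHomogeneous (t * (t + 1) / 2) := by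
  have h := (IsHomogeneous.prod univ _ (fun _ => 1) fun i _ => isHomogeneous_X R i).mul
    (IsHomogeneous.prod (univ.filter fun q : Fin t × Fin t => q.1 < q.2) _ (fun _ => 1)
      fun q _ => (isHomogeneous_X R q.2).sub (isHomogeneous_X R q.1))
  simp only [sum_const, smul_eq_mul, mul_one, card_univ, Fintype.card_fin,
    Fin.card_filter_fst_lt_snd] at h
  convert h using 1
  rw [show t + t.choose 2 = (t + 1).choose 2 by rw [Nat.choose_succ_succ, Nat.choose_one_right],
    Nat.choose_two_right, Nat.add_sub_cancel, mul_comm]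

noncomputable def descPochhammerMatrix (R : Type*) [CommRing R] {ι : Type*} (β : ι → ℕ) :
    Matrix ι ι (MvPolynomial ι R) :=
  Matrix.of fun i j => (descPochhammer (MvPolynomial ι R) (β j)).eval (X i)

section descPochhammerMatrix

variable {R : Type*} [CommRing R] {ι : Type*} [Fintype ι] [DecidableEq ι] (β : ι → ℕ)

theorem map_det_descPochhammerMatrix {S : Type*} [CommRing S] (f : R →+* S) :
    map f (descPochhammerMatrix R β).det = (descPochhammerMatrix S β).det := by
  rw [RingHom.map_det]
  congr 1
  ext i j
  simp [descPochhammerMatrix, descPochhammer_eval_eq_prod_range, map_prod]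

theorem X_dvd_det_descPochhammerMatrix (hβ : ∀ j, β j ≠ 0) (i : ι) :
    (X i : MvPolynomial ι R) ∣ (descPochhammerMatrix R β).det :=
  Matrix.dvd_det_of_eval X (fun j => descPochhammer _ (β j)) i fun j =>
    descPochhammer_ne_zero_eval_zero _ (hβ j)

theorem X_sub_X_dvd_det_descPochhammerMatrix {a b : ι} (hab : a ≠ b) :
    (X a - X b : MvPolynomial ι R) ∣ (descPochhammerMatrix R β).det :=
  Matrix.sub_dvd_det_of_eval X (fun j => descPochhammer _ (β j)) hab

theorem homogeneousComponent_det_descPochhammerMatrix :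
    homogeneousComponent (∑ j, β j) (descPochhammerMatrix R β).det =
      (Matrix.of fun i j => (X i : MvPolynomial ι R) ^ β j).det :=
  (homogeneousComponent_det fun i j => totalDegree_eval_descPochhammer_le i (β j)).trans
    (by simp only [homogeneousComponent_eval_descPochhammer])

variable [Nontrivial R] {β}

theorem homogeneousComponent_det_descPochhammerMatrix_ne_zero (hβ : Function.Injective β) :
    homogeneousComponent (∑ j, β j) (descPochhammerMatrix R β).det ≠ 0 := by
  intro h
  have := coeff_det_X_pow (R := R) hβ
  rw [← homogeneousComponent_det_descPochhammerMatrix, h, coeff_zero] at this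
  exact zero_ne_one this

theorem det_descPochhammerMatrix_ne_zero (hβ : Function.Injective β) :
    (descPochhammerMatrix R β).det ≠ 0 := fun h =>
  homogeneousComponent_det_descPochhammerMatrix_ne_zero hβ (by rw [h, map_zero])

theorem totalDegree_det_descPochhammerMatrix (hβ : Function.Injective β) :
    (descPochhammerMatrix R β).det.totalDegree = ∑ j, β j :=
  le_antisymm (totalDegree_det_le fun i j => totalDegree_eval_descPochhammer_le i (β j))
    (le_totalDegree_of_homogeneousComponent_ne_zero
      (homogeneousComponent_det_descPochhammerMatrix_ne_zero hβ))

end descPochhammerMatrix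

theorem C_mul_Wdet (t : ℕ) (β : Fin t → ℕ) :
    C (∏ j, ((β j).factorial : ℚ)) * Wdet t β = (descPochhammerMatrix ℚ β).det := by
  have hentry (i j : Fin t) :
      ∏ k ∈ range (β j), (X i - C (k : ℚ)) = descPochhammerMatrix ℚ β i j := by
    simp [descPochhammerMatrix, descPochhammer_eval_eq_prod_range]
  simp only [Wdet, hentry, Matrix.det_mul_row]
  rw [← mul_assoc, ← map_prod, ← C_mul, ← prod_mul_distrib,
    prod_eq_one fun j _ => mul_inv_cancel₀ (by positivity), C_1, one_mul]

/-- For integers `1 ≤ β₁ < ⋯ < β_t`, the polynomial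
`β₁!⋯β_t! · W_β` has integer coefficients and is divisible (over `ℤ`) by
`x₁⋯x_t·∏_{i<j}(x_j − x_i)`, with nonzero integer quotient `Q_β`; moreover
`deg W_β = β₁+⋯+β_t` and `deg Q_β = β₁+⋯+β_t − t(t+1)/2`. -/
theorem Wdet_factorization (t : ℕ) (ht : 1 ≤ t) (β : Fin t → ℕ)
    (hβ1 : 0 < β ⟨0, ht⟩) (hβmono : StrictMono β) :
    ∃ Q : MvPolynomial (Fin t) ℤ, Q ≠ 0 ∧
      C (∏ j, (Nat.factorial (β j) : ℚ)) * Wdet t β =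
        MvPolynomial.map (Int.castRingHom ℚ)
          (((∏ i, (X i : MvPolynomial (Fin t) ℤ)) *
            ∏ p ∈ Finset.univ.filter (fun p : Fin t × Fin t => p.1 < p.2),
              ((X p.2 : MvPolynomial (Fin t) ℤ) - X p.1)) * Q) ∧
      (Wdet t β).totalDegree = ∑ j, β j ∧
      Q.totalDegree = (∑ j, β j) - t * (t + 1) / 2 := by
  have hβinj := hβmono.injective
  have hβpos (j : Fin t) : β j ≠ 0 :=
    (hβ1.trans_le (hβmono.monotone (Fin.mk_le_of_le_val (Nat.zero_le j)))).ne'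
  obtain ⟨Q, hQ⟩ :=
    prod_X_mul_prod_X_sub_X_dvd (X_dvd_det_descPochhammerMatrix (R := ℤ) β hβpos) fun i j hij =>
      X_sub_X_dvd_det_descPochhammerMatrix β hij.ne'
  have hD := det_descPochhammerMatrix_ne_zero (R := ℤ) hβinj
  have hV := left_ne_zero_of_mul (hQ ▸ hD)
  have hQ0 := right_ne_zero_of_mul (hQ ▸ hD)
  refine ⟨Q, hQ0, ?_, ?_, ?_⟩
  · rw [← hQ, C_mul_Wdet, map_det_descPochhammerMatrix]
  · rw [← totalDegree_C_mul_of_ne_zero (a := ∏ j, ((β j).factorial : ℚ)) (by positivity),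
      C_mul_Wdet, totalDegree_det_descPochhammerMatrix hβinj]
  · have hdeg := totalDegree_det_descPochhammerMatrix (R := ℤ) hβinj
    rw [hQ, totalDegree_mul_of_isDomain hV hQ0,
      (isHomogeneous_prod_X_mul_prod_X_sub_X ℤ t).totalDegree hV] at hdeg
    omega
end

section
/- Let L be a field equipped with a non-archimedean additive valuation v : L → ℝ ∪ {∞}, with valuation ring A = {x ∈ L : v(x) ≥ 0}, maximal ideal M = {x ∈ L : v(x) > 0}, and residue field K = A/M. Let t ≥ 1 and let b, d be natural numbers. Suppose that every nonzero polynomial in K[x] with at most t+1 nonzero terms has at most b distinct roots in K \ {0}, and that every nonzero polynomial in L[x] with at most t+1 nonzero terms has at most d roots in 1+M counted with multiplicities. Then every nonzero polynomial in L[x] with at most t+1 nonzero terms has at most t·b·d roots in L \ {0} counted with multiplicities. (The same bound holds with distinct roots throughout in place of roots with multiplicities on both the d-hypothesis and the conclusion.) -/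
/-!
For a nonzero root `r` of `f = ∑ aᵢ Xⁱ`, the minimum of `v aᵢ + i • v r` over the support of `f`
is attained at least twice, so the valuations of the nonzero roots are among the at most `t`
slopes of the Newton polygon. Fix a root `r₀` of a given valuation and normalize `f (r₀ X)` to
have integral coefficients, one of them equal to `1`: the residues of `r / r₀`, for the roots `r`
of that valuation, are nonzero roots of its nonzero reduction, which has at most `t + 1` terms,
so there are at most `b` of them. Two roots `r`, `s` with the same valuation and residue satisfy
`r / s ∈ 1 + M`, i.e. `r / s` is a root of `f (s X)` in `1 + M`, and there are at most `d` of
those. Hence there are at most `t * b * d` nonzero roots, counted either way.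
-/

open scoped Classical

/-- The valuation ring `A = {x : 0 ≤ v x}` of a non-archimedean additive
valuation `v : L → ℝ ∪ {∞}`. -/
def valRing (L : Type*) [Field L] (v : L → WithTop ℝ)
    (hv0 : ∀ x, v x = ⊤ ↔ x = 0)
    (hvmul : ∀ x y, v (x * y) = v x + v y)
    (hvadd : ∀ x y, min (v x) (v y) ≤ v (x + y)) : Subring L where
  carrier := {x | 0 ≤ v x}
  zero_mem' := by
    simp only [Set.mem_setOf_eq, (hv0 0).mpr rfl]
    exact le_top
  one_mem' := by
    simp only [Set.mem_setOf_eq]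
    have h := hvmul 1 1
    rw [one_mul] at h
    by_cases hT : v 1 = ⊤
    · rw [hT]; exact le_top
    · obtain ⟨a, ha⟩ := WithTop.ne_top_iff_exists.mp hT
      rw [← ha] at h ⊢
      rw [← WithTop.coe_add, WithTop.coe_eq_coe] at h
      have : a = 0 := by linarith
      simp [this]
  add_mem' := fun hx hy => le_trans (le_min hx hy) (hvadd _ _)
  mul_mem' := fun {x y} hx hy => by
    have h := hvmul x y
    simp only [Set.mem_setOf_eq] at *
    rw [h]
    exact add_nonneg hx hy
  neg_mem' := fun {x} hx => by
    simp only [Set.mem_setOf_eq] at *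
    have hone : (0 : WithTop ℝ) ≤ v 1 := by
      have h := hvmul 1 1
      rw [one_mul] at h
      by_cases hT : v 1 = ⊤
      · rw [hT]; exact le_top
      · obtain ⟨a, ha⟩ := WithTop.ne_top_iff_exists.mp hT
        rw [← ha] at h ⊢
        rw [← WithTop.coe_add, WithTop.coe_eq_coe] at h
        have : a = 0 := by linarith
        simp [this]
    have h := hvmul (-1) x
    rw [neg_one_mul] at h
    rw [h]
    have hm1 : (0 : WithTop ℝ) ≤ v (-1) := by
      have h2 := hvmul (-1) (-1)
      rw [neg_one_mul, neg_neg] at h2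
      by_cases hT : v (-1) = ⊤
      · rw [hT]; exact le_top
      · obtain ⟨a, ha⟩ := WithTop.ne_top_iff_exists.mp hT
        rw [← ha]
        have h3 := hvmul 1 1
        rw [one_mul] at h3
        have h1T : v 1 ≠ ⊤ := by
          intro habs
          exact one_ne_zero ((hv0 1).mp habs)
        obtain ⟨b, hb⟩ := WithTop.ne_top_iff_exists.mp h1T
        rw [← hb, ← ha, ← WithTop.coe_add, WithTop.coe_eq_coe] at h2
        rw [← hb, ← WithTop.coe_add, WithTop.coe_eq_coe] at h3
        have hb0 : b = 0 := by linarith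
        have ha0 : a = 0 := by rw [hb0] at h2; linarith
        simp [ha0]
    exact add_nonneg hm1 hx

/-- The maximal ideal `M = {x : 0 < v x}` of the valuation ring. -/
def valIdeal (L : Type*) [Field L] (v : L → WithTop ℝ)
    (hv0 : ∀ x, v x = ⊤ ↔ x = 0)
    (hvmul : ∀ x y, v (x * y) = v x + v y)
    (hvadd : ∀ x y, min (v x) (v y) ≤ v (x + y)) :
    Ideal (valRing L v hv0 hvmul hvadd) where
  carrier := {x | 0 < v (x : L)}
  zero_mem' := by
    simp only [Set.mem_setOf_eq, ZeroMemClass.coe_zero, (hv0 0).mpr rfl]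
    exact WithTop.coe_lt_top 0
  add_mem' := fun {x y} hx hy =>
    lt_of_lt_of_le (lt_min hx hy) (hvadd _ _)
  smul_mem' := fun c x hx => by
    simp only [Set.mem_setOf_eq, smul_eq_mul, Subring.coe_mul] at *
    rw [hvmul]
    calc (0 : WithTop ℝ) < v (x : L) := hx
      _ = 0 + v (x : L) := (zero_add _).symm
      _ ≤ v (c : L) + v (x : L) := add_le_add c.2 le_rfl

open Polynomial

namespace AddValuation

variable {R Γ₀ : Type*} [Ring R] [LinearOrderedAddCommMonoidWithTop Γ₀]
  (w : AddValuation R Γ₀)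

theorem map_sum_eq_of_lt {ι : Type*} {s : Finset ι} {g : ι → R} {j : ι} (hj : j ∈ s)
    (hg : ∀ i ∈ s, i ≠ j → w (g j) < w (g i)) : w (∑ i ∈ s, g i) = w (g j) := by
  classical
  rw [← Finset.add_sum_erase s g hj]
  rcases (s.erase j).eq_empty_or_nonempty with he | ⟨i, hi⟩
  · rw [he, Finset.sum_empty, add_zero]
  have hlt : ∀ k ∈ s.erase j, w (g j) < w (g k) := fun k hk =>
    hg k (Finset.mem_of_mem_erase hk) (Finset.ne_of_mem_erase hk)
  exact w.map_add_eq_of_lt_left (w.map_lt_sum' ((hlt i hi).trans_le le_top) hlt)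

theorem exists_C_mul_coeff_nonneg_and_eq_one {K : Type*} [Field K] (w : AddValuation K Γ₀)
    {p : K[X]} (hp : p ≠ 0) :
    ∃ u, (∀ i, 0 ≤ w ((C u * p).coeff i)) ∧ ∃ i, (C u * p).coeff i = 1 := by
  obtain ⟨i, hi, hmin⟩ :=
    p.support.exists_min_image (fun i => w (p.coeff i)) (support_nonempty.2 hp)
  have hpi : p.coeff i ≠ 0 := mem_support_iff.1 hi
  refine ⟨(p.coeff i)⁻¹, fun j => ?_, i, by rw [coeff_C_mul, inv_mul_cancel₀ hpi]⟩
  have hj : w (p.coeff i) ≤ w (p.coeff j) := by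
    by_cases hj : j ∈ p.support
    · exact hmin j hj
    · rw [notMem_support_iff.1 hj, w.map_zero]
      exact le_top
  calc (0 : Γ₀) = w ((p.coeff i)⁻¹ * p.coeff i) := by rw [inv_mul_cancel₀ hpi, w.map_one]
    _ ≤ w ((C (p.coeff i)⁻¹ * p).coeff j) := by
      rw [coeff_C_mul, w.map_mul, w.map_mul]
      gcongr

end AddValuation

theorem AddValuation.map_div_eq_zero {K Γ₀ : Type*} [DivisionRing K]
    [LinearOrderedAddCommGroupWithTop Γ₀] (w : AddValuation K Γ₀) {x y : K} (hy : y ≠ 0)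
    (h : w x = w y) : w (x / y) = 0 := by
  rw [w.map_div, h,
    LinearOrderedAddCommGroupWithTop.sub_self_eq_zero_of_ne_top (w.ne_top_iff.2 hy)]

theorem Multiset.card_le_mul_card_toFinset_map {α β : Type*} [DecidableEq β] (s : Multiset α)
    (f : α → β) (n : ℕ) (hn : ∀ a ∈ s, card (s.filter (f · = f a)) ≤ n) :
    card s ≤ n * (s.map f).toFinset.card := by
  calc card s = ∑ b ∈ (s.map f).toFinset, (s.map f).count b := by
        rw [toFinset_sum_count_eq, card_map]
    _ ≤ ∑ _b ∈ (s.map f).toFinset, n := Finset.sum_le_sum fun b hb => by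
        obtain ⟨a, ha, rfl⟩ := mem_map.1 (mem_toFinset.1 hb)
        simpa only [count_map, eq_comm] using hn a ha
    _ = n * (s.map f).toFinset.card := by rw [Finset.sum_const, smul_eq_mul, mul_comm]

namespace Polynomial

variable {R K : Type*} [CommRing R] [IsDomain R] [Field K]

theorem support_comp_C_mul_X (f : R[X]) {c : R} (hc : c ≠ 0) :
    (f.comp (C c * X)).support = f.support := by
  ext i
  simp [hc]

theorem comp_C_mul_X_ne_zero {f : R[X]} (hf : f ≠ 0) {c : R} (hc : c ≠ 0) :
    f.comp (C c * X) ≠ 0 :=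
  (comp_C_mul_X_eq_zero_iff (mem_nonZeroDivisors_of_ne_zero hc)).not.2 hf

theorem roots_comp_C_mul_X (f : K[X]) {c : K} (hc : c ≠ 0) :
    (f.comp (C c * X)).roots = f.roots.map (c⁻¹ * ·) := by
  simpa using f.roots_comp_C_mul_X_add_C c 0 (IsUnit.mk0 c hc)

noncomputable def nonzeroRoots (f : R[X]) : Finset R := {r ∈ f.roots.toFinset | r ≠ 0}

theorem mem_nonzeroRoots {f : R[X]} (hf : f ≠ 0) {r : R} :
    r ∈ f.nonzeroRoots ↔ f.IsRoot r ∧ r ≠ 0 := by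
  simp [nonzeroRoots, hf]

end Polynomial

section NewtonPolygon

variable {L : Type*} [Field L] (w : AddValuation L (WithTop ℝ))

/-- Has two or more elements exactly when `-γ` is a slope of the Newton polygon of `f`. -/
noncomputable def minTermIndices (f : L[X]) (γ : WithTop ℝ) : Finset ℕ :=
  {i ∈ f.support | ∀ j ∈ f.support, w (f.coeff i) + i • γ ≤ w (f.coeff j) + j • γ}

theorem one_lt_card_minTermIndices {f : L[X]} (hf : f ≠ 0) {r : L} (hr : r ≠ 0)
    (hroot : f.IsRoot r) : 1 < (minTermIndices w f (w r)).card := by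
  have hterm : ∀ i, w (f.coeff i * r ^ i) = w (f.coeff i) + i • w r := fun i => by
    rw [w.map_mul, w.map_pow]
  obtain ⟨i, hi, hmin⟩ := f.support.exists_min_image (fun i => w (f.coeff i) + i • w r)
    (support_nonempty.2 hf)
  have hi' : i ∈ minTermIndices w f (w r) := Finset.mem_filter.2 ⟨hi, hmin⟩
  by_contra hle
  have hstrict : ∀ j ∈ f.support, j ≠ i →
      w (f.coeff i * r ^ i) < w (f.coeff j * r ^ j) := by
    intro j hj hji
    rw [hterm, hterm]
    refine (hmin j hj).lt_of_ne fun heq => hji ?_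
    exact Finset.card_le_one.1 (not_lt.1 hle) j
      (Finset.mem_filter.2 ⟨hj, fun k hk => heq ▸ hmin k hk⟩) i hi'
  have hsum := w.map_sum_eq_of_lt hi hstrict
  rw [← sum_def (p := f) (fun i a => a * r ^ i), ← eval_eq_sum, hroot.eq_zero,
    w.map_zero] at hsum
  exact (w.ne_top_iff.2 (mul_ne_zero (mem_support_iff.1 hi) (pow_ne_zero i hr))) hsum.symm

theorem le_of_mem_minTermIndices {f : L[X]} {γ₁ γ₂ : WithTop ℝ} (hγ : γ₁ < γ₂)
    (hγ₂ : γ₂ ≠ ⊤) {i j : ℕ} (hi : i ∈ minTermIndices w f γ₁)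
    (hj : j ∈ minTermIndices w f γ₂) : j ≤ i := by
  obtain ⟨hi, hi_min⟩ := Finset.mem_filter.1 hi
  obtain ⟨hj, hj_min⟩ := Finset.mem_filter.1 hj
  have h₁ := hi_min j hj
  have h₂ := hj_min i hi
  lift w (f.coeff i) to ℝ using w.ne_top_iff.2 (mem_support_iff.1 hi) with a
  lift w (f.coeff j) to ℝ using w.ne_top_iff.2 (mem_support_iff.1 hj) with b
  lift γ₂ to ℝ using hγ₂
  lift γ₁ to ℝ using hγ.ne_top
  norm_cast at h₁ h₂ hγ
  simp only [nsmul_eq_mul] at h₁ h₂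
  by_contra! hij
  have : (i : ℝ) < j := by exact_mod_cast hij
  nlinarith

theorem card_image_nonzeroRoots_lt {f : L[X]} (hf : f ≠ 0) :
    (f.nonzeroRoots.image w).card < f.support.card := by
  set Γ := f.nonzeroRoots.image w
  set top : WithTop ℝ → ℕ := fun γ => (minTermIndices w f γ).sup id
  have key : ∀ γ ∈ Γ, γ ≠ ⊤ ∧ top γ ∈ minTermIndices w f γ ∧
      ∃ i ∈ minTermIndices w f γ, i < top γ := by
    intro γ hγ
    obtain ⟨r, hr, rfl⟩ := Finset.mem_image.1 hγ
    obtain ⟨hroot, hr0⟩ := (mem_nonzeroRoots hf).1 hr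
    have hcard := one_lt_card_minTermIndices w hf hr0 hroot
    obtain ⟨i, hi, j, hj, hij⟩ := Finset.one_lt_card.1 hcard
    obtain ⟨k, hk, hktop⟩ := Finset.exists_mem_eq_sup _ ⟨i, hi⟩ id
    refine ⟨w.ne_top_iff.2 hr0, by simpa [top, hktop] using hk, ?_⟩
    rcases hij.lt_or_gt with h | h
    · exact ⟨i, hi, h.trans_le (Finset.le_sup (f := id) hj)⟩
    · exact ⟨j, hj, h.trans_le (Finset.le_sup (f := id) hi)⟩
  have hanti : StrictAntiOn top Γ := fun γ₁ h₁ γ₂ h₂ hlt => by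
    obtain ⟨-, -, i, hi, hi_lt⟩ := key γ₁ h₁
    exact (le_of_mem_minTermIndices w hlt (key γ₂ h₂).1 hi (key γ₂ h₂).2.1).trans_lt hi_lt
  have hmaps : ∀ γ ∈ Γ,
      top γ ∈ f.support.erase (f.support.min' (support_nonempty.2 hf)) := by
    intro γ hγ
    obtain ⟨-, htop, i, hi, hi_lt⟩ := key γ hγ
    have hmin := f.support.min'_le i (Finset.mem_filter.1 hi).1
    exact Finset.mem_erase.2 ⟨(hmin.trans_lt hi_lt).ne', (Finset.mem_filter.1 htop).1⟩
  calc Γ.card ≤ (f.support.erase _).card := Finset.card_le_card_of_injOn top hmaps hanti.injOn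
    _ < f.support.card := Finset.card_erase_lt_of_mem (Finset.min'_mem _ _)

end NewtonPolygon

def SparseRootBound (K : Type*) [Semiring K] (t b : ℕ) : Prop :=
  ∀ g : K[X], g ≠ 0 → g.support.card ≤ t + 1 →
    ∀ S : Finset K, (∀ r ∈ S, r ≠ 0 ∧ g.eval r = 0) → S.card ≤ b

theorem val_one_eq_zero {L : Type*} [Field L] {v : L → WithTop ℝ}
    (hv0 : ∀ x, v x = ⊤ ↔ x = 0) (hvmul : ∀ x y, v (x * y) = v x + v y) : v 1 = 0 := by
  have h := hvmul 1 1
  rw [one_mul] at h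
  lift v 1 to ℝ using (hv0 1).not.2 one_ne_zero with a
  norm_cast at h ⊢
  linarith

section ResidueField

variable {L : Type*} [Field L] {v : L → WithTop ℝ} (hv0 : ∀ x, v x = ⊤ ↔ x = 0)
  (hvmul : ∀ x y, v (x * y) = v x + v y) (hvadd : ∀ x y, min (v x) (v y) ≤ v (x + y))

noncomputable def toAddValuation : AddValuation L (WithTop ℝ) :=
  AddValuation.of v ((hv0 0).2 rfl) (val_one_eq_zero hv0 hvmul) hvadd hvmul

abbrev valResidueField : Type _ := valRing L v hv0 hvmul hvadd ⧸ valIdeal L v hv0 hvmul hvadd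

/-- The reduction map `A → K`, extended by `0` off the valuation ring `A`. -/
noncomputable def residue (x : L) : valResidueField hv0 hvmul hvadd :=
  if h : 0 ≤ v x then Ideal.Quotient.mk _ ⟨x, h⟩ else 0

variable {hv0 hvmul hvadd}

theorem residue_of_nonneg {x : L} (hx : 0 ≤ v x) :
    residue hv0 hvmul hvadd x = Ideal.Quotient.mk _ ⟨x, hx⟩ :=
  dif_pos hx

theorem residue_eq_residue_iff {x y : L} (hx : 0 ≤ v x) (hy : 0 ≤ v y) :
    residue hv0 hvmul hvadd x = residue hv0 hvmul hvadd y ↔ 0 < v (x - y) := by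
  rw [residue_of_nonneg hx, residue_of_nonneg hy, Ideal.Quotient.eq]
  rfl

theorem residue_ne_zero {x : L} (hx : v x = 0) : residue hv0 hvmul hvadd x ≠ 0 := by
  rw [residue_of_nonneg hx.ge, Ne, Ideal.Quotient.eq_zero_iff_mem]
  exact hx.not_gt

theorem card_image_residue_le {t b : ℕ}
    (hK : SparseRootBound (valResidueField hv0 hvmul hvadd) t b)
    {g : L[X]} (hg : ∀ i, 0 ≤ v (g.coeff i)) (hg_one : ∃ i, g.coeff i = 1)
    (hsupp : g.support.card ≤ t + 1) {Z : Finset L} (hZ : ∀ z ∈ Z, v z = 0 ∧ g.IsRoot z) :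
    (Z.image (residue hv0 hvmul hvadd)).card ≤ b := by
  have hcoeffs : (g.coeffs : Set L) ⊆ valRing L v hv0 hvmul hvadd := fun c hc => by
    obtain ⟨n, -, rfl⟩ := mem_coeffs_iff.1 hc
    exact hg n
  set gA := g.toSubring _ hcoeffs
  set gK := gA.map (Ideal.Quotient.mk (valIdeal L v hv0 hvmul hvadd))
  have hcoeff : ∀ i, gK.coeff i = residue hv0 hvmul hvadd (g.coeff i) := fun i => by
    rw [coeff_map, residue_of_nonneg (hg i)]
    congr
    exact Subtype.ext (coeff_toSubring' _ _ _)
  have heval : ∀ z, (hz : 0 ≤ v z) →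
      gK.eval (residue hv0 hvmul hvadd z) = residue hv0 hvmul hvadd (g.eval z) := fun z hz => by
    have hA : (valRing L v hv0 hvmul hvadd).subtype (gA.eval ⟨z, hz⟩) = g.eval z := by
      rw [← eval_map_apply, map_toSubring]
      rfl
    have hnn : 0 ≤ v (g.eval z) := by
      rw [← hA]
      exact (gA.eval ⟨z, hz⟩).2
    rw [residue_of_nonneg hz, eval_map_apply, residue_of_nonneg hnn]
    exact congrArg _ (Subtype.ext hA)
  obtain ⟨i, hi⟩ := hg_one
  have hgK : gK ≠ 0 := fun h =>
    residue_ne_zero (x := (1 : L)) (val_one_eq_zero hv0 hvmul) <| by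
      rw [← hi, ← hcoeff, h, coeff_zero]
  refine hK gK hgK ((Finset.card_le_card ?_).trans hsupp) _ fun k hk => ?_
  · exact (support_map_subset _ _).trans (support_toSubring _ _ _).subset
  obtain ⟨z, hz, rfl⟩ := Finset.mem_image.1 hk
  obtain ⟨hvz, hroot⟩ := hZ z hz
  refine ⟨residue_ne_zero hvz, ?_⟩
  rw [heval z hvz.ge, hroot.eq_zero, residue_of_nonneg (by simp [(hv0 0).2 rfl]),
    Ideal.Quotient.eq_zero_iff_mem]
  exact Ideal.zero_mem _

variable {t b : ℕ}

theorem card_image_residue_div_le (hK : SparseRootBound (valResidueField hv0 hvmul hvadd) t b)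
    {f : L[X]} (hf : f ≠ 0) (hsupp : f.support.card ≤ t + 1) {r₀ : L} (hr₀ : r₀ ≠ 0)
    {Z : Finset L} (hZ : ∀ r ∈ Z, f.IsRoot r ∧ v r = v r₀) :
    (Z.image fun r => residue hv0 hvmul hvadd (r / r₀)).card ≤ b := by
  set w := toAddValuation hv0 hvmul hvadd
  obtain ⟨u, hg, hg_one⟩ :=
    w.exists_C_mul_coeff_nonneg_and_eq_one (comp_C_mul_X_ne_zero hf hr₀)
  have hcomp : Z.image (fun r => residue hv0 hvmul hvadd (r / r₀)) =
      (Z.image (· / r₀)).image (residue hv0 hvmul hvadd) := by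
    rw [Finset.image_image]; rfl
  rw [hcomp]
  refine card_image_residue_le hK hg hg_one ?_ fun z hz => ?_
  · rw [← smul_eq_C_mul]
    exact (Finset.card_le_card (support_smul _ _)).trans (by rwa [support_comp_C_mul_X f hr₀])
  obtain ⟨r, hr, rfl⟩ := Finset.mem_image.1 hz
  obtain ⟨hroot, hvr⟩ := hZ r hr
  refine ⟨w.map_div_eq_zero hr₀ hvr, ?_⟩
  simp [mul_div_cancel₀ _ hr₀, hroot.eq_zero]

theorem lt_val_div_sub_one_of_residue_eq {r s c : L} (hs : s ≠ 0) (hc : c ≠ 0)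
    (hr : v r = v c) (hsc : v s = v c)
    (h : residue hv0 hvmul hvadd (r / c) = residue hv0 hvmul hvadd (s / c)) :
    0 < v (r / s - 1) := by
  set w := toAddValuation hv0 hvmul hvadd
  have hrc : v (r / c) = 0 := w.map_div_eq_zero hc hr
  have hcs : v (c / s) = 0 := w.map_div_eq_zero hs hsc.symm
  have hfactor : r / s - 1 = (r / c - s / c) * (c / s) := by
    field_simp
  rw [hfactor, hvmul, hcs, add_zero]
  exact (residue_eq_residue_iff hrc.ge (w.map_div_eq_zero hc hsc).ge).1 h

/-- The key of a nonzero root `r` is `(v r, residue (r / r₀))` for a chosen root `r₀` of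
valuation `v r`. -/
theorem exists_key_of_sparseRootBound
    (hK : SparseRootBound (valResidueField hv0 hvmul hvadd) t b)
    {f : L[X]} (hf : f ≠ 0) (hsupp : f.support.card ≤ t + 1) :
    ∃ κ : L → WithTop ℝ × valResidueField hv0 hvmul hvadd,
      (f.nonzeroRoots.image κ).card ≤ t * b ∧
      ∀ r ∈ f.nonzeroRoots, ∀ s ∈ f.nonzeroRoots, κ r = κ s → 0 < v (r / s - 1) := by
  set w := toAddValuation hv0 hvmul hvadd
  set D := f.nonzeroRoots
  have hD : ∀ r ∈ D, f.IsRoot r ∧ r ≠ 0 := fun r hr => (mem_nonzeroRoots hf).1 hr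
  choose! rep hrepD hrepw using fun γ (hγ : γ ∈ D.image w) => Finset.mem_image.1 hγ
  set κ := fun r => (w r, residue hv0 hvmul hvadd (r / rep (w r)))
  refine ⟨κ, ?_, fun r hr s hs hrs => ?_⟩
  · have hΓ : (D.image κ).image Prod.fst = D.image w := by
      rw [Finset.image_image]; rfl
    have hfiber : ∀ γ ∈ D.image w, {k ∈ D.image κ | k.1 = γ} ⊆
        ((D.filter (w · = γ)).image fun r => residue hv0 hvmul hvadd (r / rep γ)).image
          (Prod.mk γ) := by
      intro γ _ k hk
      obtain ⟨hkD, rfl⟩ := Finset.mem_filter.1 hk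
      obtain ⟨r, hr, rfl⟩ := Finset.mem_image.1 hkD
      exact Finset.mem_image.2
        ⟨_, Finset.mem_image_of_mem _ (Finset.mem_filter.2 ⟨hr, rfl⟩), rfl⟩
    refine (Finset.card_le_mul_card_image (f := Prod.fst) _ b fun γ hγ => ?_).trans ?_
    · rw [hΓ] at hγ
      refine (Finset.card_le_card (hfiber γ hγ)).trans (Finset.card_image_le.trans ?_)
      refine card_image_residue_div_le hK hf hsupp (hD _ (hrepD γ hγ)).2 fun r hr => ?_
      obtain ⟨hrD, rfl⟩ := Finset.mem_filter.1 hr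
      exact ⟨(hD r hrD).1, (hrepw _ hγ).symm⟩
    · rw [hΓ, mul_comm]
      exact Nat.mul_le_mul_right _
        (Nat.le_of_lt_succ ((card_image_nonzeroRoots_lt w hf).trans_le hsupp))
  obtain ⟨hw, hres⟩ := Prod.mk.inj hrs
  have hrΓ := Finset.mem_image_of_mem w hr
  rw [← hw] at hres
  exact lt_val_div_sub_one_of_residue_eq (hD s hs).2 (hD _ (hrepD _ hrΓ)).2
    (hrepw _ hrΓ).symm (hw.symm.trans (hrepw _ hrΓ).symm) hres

/-- `F` is `roots` or `roots.dedup`, to count roots with or without multiplicity. -/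
theorem card_filter_ne_zero_le_of_sparseRootBound {d : ℕ}
    (hK : SparseRootBound (valResidueField hv0 hvmul hvadd) t b) (F : L[X] → Multiset L)
    (hF : ∀ f, F f ≤ f.roots)
    (hF_comp : ∀ f c, c ≠ 0 → F (f.comp (C c * X)) = (F f).map (c⁻¹ * ·))
    (hd : ∀ f : L[X], f ≠ 0 → f.support.card ≤ t + 1 →
      Multiset.card ((F f).filter fun r => 0 < v (r - 1)) ≤ d)
    {f : L[X]} (hf : f ≠ 0) (hsupp : f.support.card ≤ t + 1) :
    Multiset.card ((F f).filter (· ≠ 0)) ≤ t * b * d := by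
  obtain ⟨κ, hκ_card, hκ⟩ := exists_key_of_sparseRootBound hK hf hsupp
  set m := (F f).filter (· ≠ 0)
  have hm : ∀ r ∈ m, r ∈ f.nonzeroRoots := fun r hr => by
    obtain ⟨hrF, hr0⟩ := Multiset.mem_filter.1 hr
    exact (mem_nonzeroRoots hf).2 ⟨(mem_roots hf).1 (Multiset.mem_of_le (hF f) hrF), hr0⟩
  have hfiber : ∀ c ∈ m, Multiset.card (m.filter (κ · = κ c)) ≤ d := by
    intro c hc
    have hc0 := ((mem_nonzeroRoots hf).1 (hm c hc)).2
    have hball : m.filter (κ · = κ c) ≤ (F f).filter fun r => 0 < v (r / c - 1) := by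
      have hP : ∀ r ∈ m.filter (κ · = κ c), 0 < v (r / c - 1) := fun r hr =>
        hκ r (hm r (Multiset.mem_of_mem_filter hr)) c (hm c hc) (Multiset.mem_filter.1 hr).2
      calc m.filter (κ · = κ c) = (m.filter (κ · = κ c)).filter fun r => 0 < v (r / c - 1) :=
            (Multiset.filter_eq_self.2 hP).symm
        _ ≤ _ := Multiset.filter_le_filter _
          ((Multiset.filter_le _ _).trans (Multiset.filter_le _ _))
    calc Multiset.card (m.filter (κ · = κ c))
        ≤ Multiset.card ((F f).filter fun r => 0 < v (r / c - 1)) := Multiset.card_le_card hball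
      _ = Multiset.card ((F (f.comp (C c * X))).filter fun z => 0 < v (z - 1)) := by
        rw [hF_comp f c hc0, Multiset.filter_map, Multiset.card_map]
        simp only [Function.comp_def, inv_mul_eq_div]
      _ ≤ d := hd _ (comp_C_mul_X_ne_zero hf hc0) (by rwa [support_comp_C_mul_X f hc0])
  have himage : (m.map κ).toFinset ⊆ f.nonzeroRoots.image κ := fun k hk => by
    obtain ⟨r, hr, rfl⟩ := Multiset.mem_map.1 (Multiset.mem_toFinset.1 hk)
    exact Finset.mem_image_of_mem κ (hm r hr)
  calc Multiset.card m ≤ d * (m.map κ).toFinset.card :=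
        m.card_le_mul_card_toFinset_map κ d hfiber
    _ ≤ d * (t * b) := Nat.mul_le_mul_left d ((Finset.card_le_card himage).trans hκ_card)
    _ = t * b * d := mul_comm _ _

end ResidueField

theorem roots_bound_of_residue_bound_general (L : Type*) [Field L] (v : L → WithTop ℝ)
    (hv0 : ∀ x, v x = ⊤ ↔ x = 0)
    (hvmul : ∀ x y, v (x * y) = v x + v y)
    (hvadd : ∀ x y, min (v x) (v y) ≤ v (x + y))
    (t b d : ℕ)
    (hK : ∀ g : Polynomial
        ((valRing L v hv0 hvmul hvadd) ⧸ (valIdeal L v hv0 hvmul hvadd)),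
      g ≠ 0 → g.support.card ≤ t + 1 →
      ∀ S : Finset ((valRing L v hv0 hvmul hvadd) ⧸ (valIdeal L v hv0 hvmul hvadd)),
        (∀ r ∈ S, r ≠ 0 ∧ Polynomial.eval r g = 0) → S.card ≤ b) :
    ((∀ f : Polynomial L, f ≠ 0 → f.support.card ≤ t + 1 →
        (f.roots.filter (fun r => 0 < v (r - 1))).card ≤ d) →
      ∀ f : Polynomial L, f ≠ 0 → f.support.card ≤ t + 1 →
        (f.roots.filter (fun r => r ≠ 0)).card ≤ t * b * d) ∧
    ((∀ f : Polynomial L, f ≠ 0 → f.support.card ≤ t + 1 →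
        (f.roots.toFinset.filter (fun r => 0 < v (r - 1))).card ≤ d) →
      ∀ f : Polynomial L, f ≠ 0 → f.support.card ≤ t + 1 →
        (f.roots.toFinset.filter (fun r => r ≠ 0)).card ≤ t * b * d) := by
  refine ⟨fun hd f hf hsupp => ?_, fun hd f hf hsupp => ?_⟩
  · exact card_filter_ne_zero_le_of_sparseRootBound hK roots (fun _ => le_rfl)
      (fun f _ hc => roots_comp_C_mul_X f hc) hd hf hsupp
  · refine card_filter_ne_zero_le_of_sparseRootBound hK (fun f => f.roots.dedup)
      (fun f => Multiset.dedup_le _) (fun f c hc => ?_) hd hf hsupp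
    rw [roots_comp_C_mul_X f hc,
      Multiset.dedup_map_of_injective (mul_right_injective₀ (inv_ne_zero hc))]

/-- Let `L` be a field with additive non-archimedean valuation
`v`, valuation ring `A`, maximal ideal `M` and residue field `K = A/M`, and let
`t ≥ 1`.  Suppose every nonzero polynomial over `K` with at most `t+1` terms has
at most `b` distinct nonzero roots.  If every nonzero polynomial over `L` with at
most `t+1` terms has at most `d` roots in `1+M` (with multiplicities, resp.
distinct), then every nonzero polynomial over `L` with at most `t+1` terms has at
most `t·b·d` nonzero roots in `L` (with multiplicities, resp. distinct). -/
theorem roots_bound_of_residue_bound (L : Type*) [Field L] (v : L → WithTop ℝ)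
    (hv0 : ∀ x, v x = ⊤ ↔ x = 0)
    (hvmul : ∀ x y, v (x * y) = v x + v y)
    (hvadd : ∀ x y, min (v x) (v y) ≤ v (x + y))
    (t b d : ℕ) (ht : 1 ≤ t)
    (hK : ∀ g : Polynomial
        ((valRing L v hv0 hvmul hvadd) ⧸ (valIdeal L v hv0 hvmul hvadd)),
      g ≠ 0 → g.support.card ≤ t + 1 →
      ∀ S : Finset ((valRing L v hv0 hvmul hvadd) ⧸ (valIdeal L v hv0 hvmul hvadd)),
        (∀ r ∈ S, r ≠ 0 ∧ Polynomial.eval r g = 0) → S.card ≤ b) :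
    ((∀ f : Polynomial L, f ≠ 0 → f.support.card ≤ t + 1 →
        (f.roots.filter (fun r => 0 < v (r - 1))).card ≤ d) →
      ∀ f : Polynomial L, f ≠ 0 → f.support.card ≤ t + 1 →
        (f.roots.filter (fun r => r ≠ 0)).card ≤ t * b * d) ∧
    ((∀ f : Polynomial L, f ≠ 0 → f.support.card ≤ t + 1 →
        (f.roots.toFinset.filter (fun r => 0 < v (r - 1))).card ≤ d) →
      ∀ f : Polynomial L, f ≠ 0 → f.support.card ≤ t + 1 →
        (f.roots.toFinset.filter (fun r => r ≠ 0)).card ≤ t * b * d) :=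
  roots_bound_of_residue_bound_general L v hv0 hvmul hvadd t b d hK
end

section
/- Let L be a field equipped with a non-archimedean additive valuation v : L → ℝ ∪ {∞} such that v(n·1_L) = 0 for every nonzero integer n, and let M = {x ∈ L : v(x) > 0} be the maximal ideal of the valuation ring. Then for every t ≥ 1, every nonzero polynomial in L[x] with at most t+1 nonzero terms has at most t roots in 1+M counted with multiplicities, i.e. Σ_{r ∈ 1+M} mult(f; r) ≤ t. In particular D₁(t,L) ≤ D_m(t,L) ≤ t. -/
open scoped Classical

/-!
Shifting by `1` turns the roots of `f` in `1 + M` into the roots of `g = f(X + 1)` in `M`, and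
`g` has coefficients `g n = ∑ₑ f e * (e choose n)`. On the at most `t + 1` exponents `e` of `f`,
`e ↦ (e choose n)` is a rational combination of `e ↦ (e choose j)` for `j ≤ t` (interpolate, then
expand in the binomial basis by Newton's forward-difference formula). Rationals have nonnegative
valuation, so the minimal valuation of a coefficient of `g` is attained at some index `j ≤ t`.
Finally, if `g = P * u` with `P` monic and its lower coefficients in `M`, and `v` is minimal on
the coefficients of `u` at index `i`, then the coefficient of `g` at `deg P + i` has that minimal
valuation while all coefficients of `g` below `deg P` exceed it; hence `deg P ≤ j`.
-/

open Polynomial Finset fwdDiff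

theorem Polynomial.eval_natCast_eq_sum_choose_smul_fwdDiff {R : Type*} [CommRing R] {P : R[X]}
    {k : ℕ} (hP : P.natDegree < k) (e : ℕ) :
    P.eval (e : R) = ∑ j ∈ range k, e.choose j • Δ_[1] ^[j] P.eval 0 := by
  have hnewton := shift_eq_sum_fwdDiff_iter 1 P.eval e 0
  rw [zero_add, nsmul_one] at hnewton
  rw [hnewton, sum_subset (range_subset_range.mpr (Nat.le_add_right (e + 1) k)),
    sum_subset (range_subset_range.mpr (Nat.le_add_left k (e + 1)))]
  · intro j _ hj
    rw [fwdDiff_iter_eq_zero_of_degree_lt (hP.trans_le (by simpa using hj)), Pi.zero_apply,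
      smul_zero]
  · intro j _ hj
    rw [Nat.choose_eq_zero_of_lt (by simpa using hj), zero_smul]

theorem exists_choose_eq_sum_mul_choose (S : Finset ℕ) (n : ℕ) :
    ∃ q : ℕ → ℚ, ∀ e ∈ S, (e.choose n : ℚ) = ∑ j ∈ range #S, q j * e.choose j := by
  let P := Lagrange.interpolate S Nat.cast fun e => (e.choose n : ℚ)
  have hinj : Set.InjOn (Nat.cast : ℕ → ℚ) S := Nat.cast_injective.injOn
  refine ⟨fun j => Δ_[1] ^[j] P.eval 0, fun e he => ?_⟩
  have hdeg : P.natDegree < #S := by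
    by_cases hP : P = 0
    · simpa [hP] using ⟨e, he⟩
    · exact (natDegree_lt_iff_degree_lt hP).mpr (Lagrange.degree_interpolate_lt _ hinj)
  rw [← Lagrange.eval_interpolate_at_node (fun e => (e.choose n : ℚ)) hinj he,
    eval_natCast_eq_sum_choose_smul_fwdDiff hdeg]
  simp only [nsmul_eq_mul, mul_comm]

theorem Polynomial.taylor_one_coeff {R : Type*} [CommRing R] (f : R[X]) (n : ℕ) :
    (taylor 1 f).coeff n = ∑ e ∈ f.support, f.coeff e * e.choose n := by
  rw [taylor_apply, map_one, comp_eq_sum_left, sum_def, finsetSum_coeff]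
  simp only [coeff_C_mul, coeff_X_add_one_pow]

theorem Polynomial.exists_taylor_one_coeff_eq_sum {K : Type*} [Field K] [CharZero K] (f : K[X])
    (n : ℕ) : ∃ q : ℕ → ℚ, (taylor 1 f).coeff n =
      ∑ j ∈ range #f.support, (q j : K) * (taylor 1 f).coeff j := by
  obtain ⟨q, hq⟩ := exists_choose_eq_sum_mul_choose f.support n
  refine ⟨q, ?_⟩
  simp only [taylor_one_coeff, mul_sum]
  rw [sum_comm]
  refine sum_congr rfl fun e he => ?_
  have hcast := congrArg (Rat.cast : ℚ → K) (hq e he)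
  push_cast at hcast
  rw [hcast, mul_sum]
  exact sum_congr rfl fun j _ => by ring

theorem Polynomial.roots_taylor {K : Type*} [Field K] (f : K[X]) (r : K) :
    (taylor r f).roots = f.roots.map (· - r) := by
  ext a
  have hcount := Multiset.count_map_eq_count' (· - r) f.roots sub_left_injective (a + r)
  rw [add_sub_cancel_right] at hcount
  rw [hcount, count_roots, count_roots, rootMultiplicity_eq_rootMultiplicity, ← taylor_apply,
    taylor_taylor, rootMultiplicity_eq_rootMultiplicity (t := a + r), ← taylor_apply]

namespace AddValuation

variable {K Γ : Type*} [Field K] [LinearOrderedAddCommGroupWithTop Γ] (v : AddValuation K Γ)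

theorem charZero_of_map_intCast (hv : ∀ n : ℤ, n ≠ 0 → v n = 0) : CharZero K :=
  charZero_of_inj_zero fun n hn => by
    by_contra hn0
    simpa [hn] using hv n (by exact_mod_cast hn0)

theorem map_ratCast_nonneg (hv : ∀ n : ℤ, n ≠ 0 → v n = 0) (q : ℚ) : 0 ≤ v (q : K) := by
  rcases eq_or_ne q 0 with rfl | hq
  · simp
  · rw [Rat.cast_def, map_div, hv q.num (Rat.num_ne_zero.mpr hq), ← Int.cast_natCast,
      hv q.den (by exact_mod_cast q.den_nz), sub_zero]

theorem lt_map_coeff_mul {R u : K[X]} {w : Γ} (hw : w ≠ ⊤) (hR : ∀ i, 0 < v (R.coeff i))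
    (hu : ∀ i, w ≤ v (u.coeff i)) (n : ℕ) : w < v ((R * u).coeff n) := by
  rw [coeff_mul]
  refine v.map_lt_sum hw fun x _ => ?_
  rw [v.map_mul]
  calc w = 0 + w := (zero_add w).symm
    _ < v (R.coeff x.1) + w := (add_lt_add_iff_left_of_ne_top hw).mpr (hR x.1)
    _ ≤ v (R.coeff x.1) + v (u.coeff x.2) := by gcongr; exact hu x.2

theorem natDegree_le_of_monic_dvd {P g : K[X]} (hP : P.Monic)
    (hPv : ∀ i < P.natDegree, 0 < v (P.coeff i)) (hPg : P ∣ g) (hg : g ≠ 0) {j : ℕ}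
    (hj : ∀ n, v (g.coeff j) ≤ v (g.coeff n)) : P.natDegree ≤ j := by
  obtain ⟨u, rfl⟩ := hPg
  set N := P.natDegree
  have hsplit : P = X ^ N + P.eraseLead := by
    conv_lhs => rw [← eraseLead_add_monomial_natDegree_leadingCoeff P]
    rw [hP.leadingCoeff, monomial_one_right_eq_X_pow, add_comm]
  have hR : ∀ i, 0 < v (P.eraseLead.coeff i) := by
    intro i
    rw [eraseLead_coeff]
    split_ifs with hi
    · simp
    · rcases lt_or_gt_of_ne hi with hlt | hgt
      · exact hPv i hlt
      · simp [coeff_eq_zero_of_natDegree_lt hgt]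
  obtain ⟨i₀, hi₀, hmin⟩ := exists_min_image u.support (fun i => v (u.coeff i))
    (nonempty_support_iff.mpr (right_ne_zero_of_mul hg))
  have hw : v (u.coeff i₀) ≠ ⊤ := v.ne_top_iff.mpr (mem_support_iff.mp hi₀)
  have hu : ∀ i, v (u.coeff i₀) ≤ v (u.coeff i) := fun i => by
    by_cases hi : i ∈ u.support
    · exact hmin i hi
    · simp [notMem_support_iff.mp hi]
  have hcoeff : ∀ n, (P * u).coeff n =
      (if N ≤ n then u.coeff (n - N) else 0) + (P.eraseLead * u).coeff n := fun n => by
    rw [hsplit, add_mul, coeff_add, coeff_X_pow_mul', ← hsplit]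
  have hlow : ∀ n < N, v (u.coeff i₀) < v ((P * u).coeff n) := fun n hn => by
    rw [hcoeff, if_neg (not_le.mpr hn), zero_add]
    exact v.lt_map_coeff_mul hw hR hu n
  have hattained : v ((P * u).coeff (N + i₀)) = v (u.coeff i₀) := by
    rw [hcoeff, if_pos (Nat.le_add_right N i₀), Nat.add_sub_cancel_left]
    exact v.map_add_eq_of_lt_left (v.lt_map_coeff_mul hw hR hu _)
  by_contra! hjN
  exact (hj (N + i₀)).not_gt (hattained ▸ hlow j hjN)

theorem map_multiset_prod_pos {t : Multiset K} (ht : t ≠ 0) (hpos : ∀ y ∈ t, 0 < v y) :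
    0 < v t.prod := by
  obtain ⟨a, ha⟩ := Multiset.exists_mem_of_ne_zero ht
  obtain ⟨s, rfl⟩ := Multiset.exists_cons_of_mem ha
  have hs : 0 ≤ v s.prod := Multiset.prod_induction (fun x => 0 ≤ v x) s
    (fun x y hx hy => by rw [v.map_mul]; exact add_nonneg hx hy) (by simp)
    (fun y hy => (hpos y (Multiset.mem_cons_of_mem hy)).le)
  rw [Multiset.prod_cons, v.map_mul]
  exact add_pos_of_pos_of_nonneg (hpos a ha) hs

theorem map_coeff_prod_X_sub_C_pos {m : Multiset K} (hm : ∀ y ∈ m, 0 < v y) {i : ℕ}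
    (hi : i < Multiset.card m) : 0 < v ((m.map fun y => X - C y).prod.coeff i) := by
  rw [Multiset.prod_X_sub_C_coeff m hi.le, v.map_mul, v.map_pow, v.map_neg, v.map_one,
    nsmul_zero, zero_add, Multiset.esymm]
  refine Multiset.sum_induction (fun x => 0 < v x) _ (fun x y => v.map_lt_add) (by simp) ?_
  simp only [Multiset.mem_map, Multiset.mem_powersetCard]
  rintro _ ⟨t, ⟨htm, htcard⟩, rfl⟩
  refine v.map_multiset_prod_pos ?_ fun y hy => hm y (Multiset.mem_of_le htm hy)
  rw [← Multiset.card_pos, htcard]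
  omega

theorem card_roots_filter_pos_le {g : K[X]} (hg : g ≠ 0) {j : ℕ}
    (hj : ∀ n, v (g.coeff j) ≤ v (g.coeff n)) :
    Multiset.card (g.roots.filter fun y => 0 < v y) ≤ j := by
  set m := g.roots.filter fun y => 0 < v y
  have hm : ∀ y ∈ m, 0 < v y := fun y hy => (Multiset.mem_filter.mp hy).2
  have hcoeff : ∀ i < (m.map fun y => X - C y).prod.natDegree,
      0 < v ((m.map fun y => X - C y).prod.coeff i) := fun i hi =>
    v.map_coeff_prod_X_sub_C_pos hm (by rwa [natDegree_multiset_prod_X_sub_C_eq_card] at hi)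
  have hdvd : (m.map fun y => X - C y).prod ∣ g :=
    (Multiset.prod_dvd_prod_of_le (Multiset.map_le_map (Multiset.filter_le _ _))).trans
      (prod_multiset_X_sub_C_dvd g)
  rw [← natDegree_multiset_prod_X_sub_C_eq_card m]
  exact v.natDegree_le_of_monic_dvd (monic_multiset_prod_of_monic _ _ fun y _ => monic_X_sub_C y)
    hcoeff hdvd hg hj

theorem exists_lt_card_support_forall_map_taylor_one_coeff_le [CharZero K]
    (hv : ∀ n : ℤ, n ≠ 0 → v n = 0) {f : K[X]} (hf : f ≠ 0) :
    ∃ j < #f.support, ∀ n, v ((taylor 1 f).coeff j) ≤ v ((taylor 1 f).coeff n) := by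
  obtain ⟨j, hj, hmin⟩ := exists_min_image (range #f.support) (fun j => v ((taylor 1 f).coeff j))
    ⟨0, mem_range.mpr (card_pos.mpr (support_nonempty.mpr hf))⟩
  refine ⟨j, mem_range.mp hj, fun n => ?_⟩
  obtain ⟨q, hq⟩ := exists_taylor_one_coeff_eq_sum f n
  rw [hq]
  refine v.map_le_sum fun i hi => ?_
  rw [v.map_mul]
  calc v ((taylor 1 f).coeff j) = 0 + v ((taylor 1 f).coeff j) := (zero_add _).symm
    _ ≤ v (q i : K) + v ((taylor 1 f).coeff i) :=
      add_le_add (v.map_ratCast_nonneg hv _) (hmin i hi)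

end AddValuation

theorem roots_one_add_maximalIdeal_le_general (L : Type*) [Field L] (v : L → WithTop ℝ)
    (hv0 : ∀ x, v x = ⊤ ↔ x = 0)
    (hvmul : ∀ x y, v (x * y) = v x + v y)
    (hvadd : ∀ x y, min (v x) (v y) ≤ v (x + y))
    (hvint : ∀ n : ℤ, n ≠ 0 → v ((n : ℤ) : L) = 0)
    (t : ℕ) :
    (∀ f : Polynomial L, f ≠ 0 → f.support.card ≤ t + 1 →
      (f.roots.filter (fun r => 0 < v (r - 1))).card ≤ t) ∧
    (∀ f : Polynomial L, f ≠ 0 → f.support.card ≤ t + 1 →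
      (f.roots.toFinset.filter (fun r => 0 < v (r - 1))).card ≤ t) := by
  let w := AddValuation.of v ((hv0 0).mpr rfl) (by simpa using hvint 1 one_ne_zero) hvadd hvmul
  have := w.charZero_of_map_intCast hvint
  have hmult : ∀ f : L[X], f ≠ 0 → #f.support ≤ t + 1 →
      Multiset.card (f.roots.filter fun r => 0 < v (r - 1)) ≤ t := by
    intro f hf hcard
    obtain ⟨j, hj, hmin⟩ := w.exists_lt_card_support_forall_map_taylor_one_coeff_le hvint hf
    have hroots := w.card_roots_filter_pos_le ((taylor_eq_zero 1 f).not.mpr hf) hmin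
    rw [roots_taylor, Multiset.filter_map, Multiset.card_map] at hroots
    exact hroots.trans (by omega)
  refine ⟨hmult, fun f hf hcard => ?_⟩
  rw [← Multiset.toFinset_filter]
  exact (Multiset.toFinset_card_le _).trans (hmult f hf hcard)

/-- Let `L` be a field with a non-archimedean additive
valuation `v : L → ℝ ∪ {∞}` such that `v(n·1) = 0` for every nonzero integer
`n`, and let `M = {x : 0 < v x}` be the maximal ideal of the valuation ring.
Then for `t ≥ 1` every nonzero polynomial over `L` with at most `t+1` nonzero
terms has at most `t` roots in `1 + M` counted with multiplicities (hence also
at most `t` distinct roots there): `D₁(t,L) ≤ D_m(t,L) ≤ t`. -/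
theorem roots_one_add_maximalIdeal_le (L : Type*) [Field L] (v : L → WithTop ℝ)
    (hv0 : ∀ x, v x = ⊤ ↔ x = 0)
    (hvmul : ∀ x y, v (x * y) = v x + v y)
    (hvadd : ∀ x y, min (v x) (v y) ≤ v (x + y))
    (hvint : ∀ n : ℤ, n ≠ 0 → v ((n : ℤ) : L) = 0)
    (t : ℕ) (ht : 1 ≤ t) :
    (∀ f : Polynomial L, f ≠ 0 → f.support.card ≤ t + 1 →
      (f.roots.filter (fun r => 0 < v (r - 1))).card ≤ t) ∧
    (∀ f : Polynomial L, f ≠ 0 → f.support.card ≤ t + 1 →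
      (f.roots.toFinset.filter (fun r => 0 < v (r - 1))).card ≤ t) :=
  roots_one_add_maximalIdeal_le_general L v hv0 hvmul hvadd hvint t
end

section
/- Let p be a prime and let K be a finite extension of ℚ_p with ramification index e. If p − 1 does not divide e, then 1 is the only p-th root of unity in K; that is, any x ∈ K with x^p = 1 satisfies x = 1. -/
/-!
If `x ≠ 1` and `x ^ p = 1`, then `x` is a primitive `p`-th root of unity lying in the ring of
integers `𝒪_K`. There `p = ±∏_{0<k<p} (x ^ k - 1)`, and each factor is associated to `x - 1`
because `k` is a unit mod `p`, so `p` is associated to `(x - 1) ^ (p - 1)`. Hence `p 𝒪_K` is the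
`(p - 1)`-st power of the ideal `(x - 1)`, so every ramification index of `𝒪_K` over `ℤ_p`
is divisible by `p - 1`.
-/

open Ideal UniqueFactorizationMonoid

theorem Ideal.dvd_ramificationIdx'_of_map_eq_pow {R S : Type*} [CommRing R] [CommRing S]
    [Algebra R S] [IsDedekindDomain S] {p : Ideal R} {P J : Ideal S} (hP : P.IsPrime) {n : ℕ}
    (h : p.map (algebraMap R S) = J ^ n) : n ∣ ramificationIdx' p P := by
  by_cases hp0 : p.map (algebraMap R S) = ⊥
  · rw [ramificationIdx'_eq_zero fun k ↦ ⟨k + 1, by simp [hp0], k.lt_succ_self⟩]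
    exact dvd_zero n
  by_cases hP0 : P = ⊥
  · rw [ramificationIdx'_of_not_le (by rwa [hP0, le_bot_iff])]
    exact dvd_zero n
  rw [IsDedekindDomain.ramificationIdx'_eq_normalizedFactors_count hp0 hP hP0, h,
    normalizedFactors_pow, Multiset.count_nsmul]
  exact dvd_mul_right n _

theorem IsPrimitiveRoot.associated_natCast_sub_one_pow {A : Type*} [CommRing A] [IsDomain A]
    {p : ℕ} (hp : p.Prime) {ζ : A} (hζ : IsPrimitiveRoot ζ p) :
    Associated (p : A) ((ζ - 1) ^ (p - 1)) := by
  obtain ⟨n, rfl⟩ : ∃ n, p = n + 1 := ⟨p - 1, (Nat.sub_add_cancel hp.one_le).symm⟩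
  rw [Nat.cast_succ, ← hζ.prod_pow_sub_one_eq_order, Nat.add_sub_cancel,
    show (ζ - 1) ^ n = ∏ _k ∈ Finset.range n, (ζ - 1) by simp]
  refine (associated_unit_mul_left _ _ ((isUnit_neg_one (α := A)).pow n)).trans
    (Associated.prod _ _ _ fun k hk ↦ ?_)
  exact (hζ.associated_sub_one_pow_sub_one_of_coprime
    (Nat.coprime_of_lt_prime k.succ_ne_zero (by simpa using hk) hp).symm).symm

/-- Let `K/ℚ_p` be a finite extension with ramification index
`e` (computed for any maximal ideal `M` of the ring of integers, i.e. the
integral closure of `ℤ_p` in `K`).  If `p − 1` does not divide `e`, then `1` is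
the only `p`-th root of unity in `K`. -/
theorem pth_root_of_unity_trivial (p : ℕ) [Fact p.Prime] (K : Type*) [Field K]
    [Algebra ℚ_[p] K] [FiniteDimensional ℚ_[p] K]
    [Algebra ℤ_[p] K] [IsScalarTower ℤ_[p] ℚ_[p] K]
    (e : ℕ) (M : Ideal (integralClosure ℤ_[p] K)) (hM : M.IsMaximal)
    (he : Ideal.ramificationIdx'
        (Ideal.span {(p : ℤ_[p])}) M = e)
    (hdvd : ¬ (p - 1) ∣ e) :
    ∀ x : K, x ^ p = 1 → x = 1 := by
  intro x hx
  by_contra hx1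
  have hp : p.Prime := Fact.out
  have := integralClosure.isDedekindDomain ℤ_[p] ℚ_[p] K
  have hint : IsIntegral ℤ_[p] x := IsIntegral.of_pow hp.pos (hx ▸ isIntegral_one)
  set ζ : integralClosure ℤ_[p] K := ⟨x, hint⟩
  have hζ : IsPrimitiveRoot ζ p := isPrimitiveRoot_of_mem_nthRootsFinset hp
    ((Polynomial.mem_nthRootsFinset hp.pos 1).2 (Subtype.ext hx))
    fun h ↦ hx1 (congrArg Subtype.val h)
  have hmap : (span {(p : ℤ_[p])}).map (algebraMap ℤ_[p] (integralClosure ℤ_[p] K)) =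
      span {ζ - 1} ^ (p - 1) := by
    rw [map_span, Set.image_singleton, map_natCast,
      span_singleton_eq_span_singleton.mpr (hζ.associated_natCast_sub_one_pow hp),
      span_singleton_pow]
  exact hdvd (he ▸ dvd_ramificationIdx'_of_map_eq_pow hM.isPrime hmap)
end

section
/- Let p be a prime and let t, e be positive integers with p > t + e. Then C(p, t, 1/e) = t, where for nonnegative integers t, m, d_t(m) denotes the least common multiple of all integers expressible as a product of at most t pairwise distinct positive integers each at most m, and for a real number r > 0, C(p,t,r) = max{ m ∈ ℤ_{≥0} : m·r − v_p(d_t(m)) ≤ max_{0≤i≤t} ( i·r − v_p(i!) ) }, with v_p the p-adic valuation on the integers. -/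
/-!
For `i ≤ t < p` the factorial `i!` is prime to `p`, so the maximum on the right-hand side is
`t / e`, attained at `i = t`; this already shows that `t` is admissible. Conversely, an admissible
`m` satisfies `m ≤ t + e v` with `v = v_p(d_t(m))`. Since `d_t(m)` divides `m!`, Legendre's
formula gives `(p - 1) v < m` for `m ≠ 0`, and `t + e ≤ p - 1` then leaves `t v < t`, so `v = 0`
and `m ≤ t`.
-/

/-- `d_t(m)`: the least common multiple of all products of at most `t` pairwise
distinct positive integers that are at most `m` (the empty product is `1`). -/
def dLcm (t m : ℕ) : ℕ :=
  Finset.lcm (((Finset.Icc 1 m).powerset).filter (fun A => A.card ≤ t))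
    (fun A => ∏ a ∈ A, a)

open Finset Nat

lemma dLcm_dvd_factorial (t m : ℕ) : dLcm t m ∣ m ! := by
  refine Finset.lcm_dvd fun A hA => ?_
  rw [mem_filter, mem_powerset] at hA
  calc ∏ a ∈ A, a ∣ ∏ a ∈ Icc 1 m, a := prod_dvd_prod_of_subset _ _ _ hA.1
    _ = m ! := by rw [← Ico_add_one_right_eq_Icc, prod_Ico_id_eq_factorial]

section padicValNat

variable {p : ℕ} [Fact p.Prime]

lemma padicValNat_le_of_dvd {a b : ℕ} (hb : b ≠ 0) (h : a ∣ b) :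
    padicValNat p a ≤ padicValNat p b :=
  (padicValNat_dvd_iff_le hb).mp (pow_padicValNat_dvd.trans h)

lemma padicValNat_factorial_eq_zero_of_lt {n : ℕ} (h : n < p) : padicValNat p n ! = 0 :=
  padicValNat.eq_zero_of_not_dvd fun hdvd =>
    (Nat.Prime.dvd_factorial Fact.out).mp hdvd |>.not_gt h

lemma sub_one_mul_padicValNat_dLcm_lt (t : ℕ) {m : ℕ} (hm : m ≠ 0) :
    (p - 1) * padicValNat p (dLcm t m) < m :=
  calc (p - 1) * padicValNat p (dLcm t m)
      ≤ (p - 1) * padicValNat p m ! :=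
        Nat.mul_le_mul_left _ (padicValNat_le_of_dvd (factorial_ne_zero m) (dLcm_dvd_factorial t m))
    _ < m := sub_one_mul_padicValNat_factorial_lt_of_ne_zero p hm

lemma sup'_range_mul_sub_padicValNat_factorial {t : ℕ} (htp : t < p) {r : ℝ} (hr : 0 ≤ r) :
    (range (t + 1)).sup' nonempty_range_add_one
      (fun i => (i : ℝ) * r - (padicValNat p i ! : ℝ)) = t * r := by
  refine le_antisymm (sup'_le _ _ fun i hi => ?_) ?_
  · have hit : (i : ℝ) ≤ t := by exact_mod_cast Nat.lt_succ_iff.mp (mem_range.mp hi)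
    have hv : (0 : ℝ) ≤ padicValNat p i ! := Nat.cast_nonneg _
    nlinarith
  · convert le_sup' (fun i : ℕ => (i : ℝ) * r - (padicValNat p i ! : ℝ)) (self_mem_range_succ t)
    simp [padicValNat_factorial_eq_zero_of_lt htp]

lemma le_of_le_add_mul_padicValNat_dLcm {t e m : ℕ} (hpte : t + e < p)
    (hm : m ≤ t + e * padicValNat p (dLcm t m)) : m ≤ t := by
  rcases eq_or_ne m 0 with rfl | hm0
  · exact Nat.zero_le t
  set v := padicValNat p (dLcm t m)
  have hv : (t + e) * v < t + e * v :=
    calc (t + e) * v ≤ (p - 1) * v := Nat.mul_le_mul_right v (by omega)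
      _ < m := sub_one_mul_padicValNat_dLcm_lt t hm0
      _ ≤ t + e * v := hm
  have hv0 : v = 0 := by
    by_contra hne
    nlinarith [Nat.pos_of_ne_zero hne]
  simpa [hv0] using hm

end padicValNat

theorem lenstra_C_eq_general (p t e : ℕ) [Fact p.Prime] (he : 1 ≤ e)
    (hpte : t + e < p) :
    ((t : ℝ) * (1 / e) - (padicValNat p (dLcm t t) : ℝ) ≤
      Finset.sup' (Finset.range (t + 1)) Finset.nonempty_range_add_one
        (fun i => (i : ℝ) * (1 / e) - (padicValNat p (Nat.factorial i) : ℝ))) ∧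
    (∀ m : ℕ, ((m : ℝ) * (1 / e) - (padicValNat p (dLcm t m) : ℝ) ≤
        Finset.sup' (Finset.range (t + 1)) Finset.nonempty_range_add_one
          (fun i => (i : ℝ) * (1 / e) - (padicValNat p (Nat.factorial i) : ℝ))) →
      m ≤ t) := by
  have he0 : (0 : ℝ) < e := by exact_mod_cast he
  rw [sup'_range_mul_sub_padicValNat_factorial (by omega) (by positivity)]
  refine ⟨sub_le_self _ (Nat.cast_nonneg _), fun m hm => le_of_le_add_mul_padicValNat_dLcm hpte ?_⟩
  have hm' : (m : ℝ) ≤ t + e * padicValNat p (dLcm t m) := by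
    rw [sub_le_iff_le_add, ← sub_le_iff_le_add', ← sub_mul, mul_one_div, div_le_iff₀ he0] at hm
    linarith
  exact_mod_cast hm'

/-- Let `p` be a prime and `t, e` positive integers with
`p > t + e`.  Then `C(p, t, 1/e) = t`, i.e. `t` belongs to the set
`{m : m/e − v_p(d_t(m)) ≤ max_{0≤i≤t} (i/e − v_p(i!))}` and every member `m` of
that set satisfies `m ≤ t`. -/
theorem lenstra_C_eq (p t e : ℕ) [Fact p.Prime] (ht : 1 ≤ t) (he : 1 ≤ e)
    (hpte : t + e < p) :
    ((t : ℝ) * (1 / e) - (padicValNat p (dLcm t t) : ℝ) ≤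
      Finset.sup' (Finset.range (t + 1)) Finset.nonempty_range_add_one
        (fun i => (i : ℝ) * (1 / e) - (padicValNat p (Nat.factorial i) : ℝ))) ∧
    (∀ m : ℕ, ((m : ℝ) * (1 / e) - (padicValNat p (dLcm t m) : ℝ) ≤
        Finset.sup' (Finset.range (t + 1)) Finset.nonempty_range_add_one
          (fun i => (i : ℝ) * (1 / e) - (padicValNat p (Nat.factorial i) : ℝ))) →
      m ≤ t) :=
  lenstra_C_eq_general p t e he hpte
end

section
/- Let p be an odd prime, let y ∈ ℤ_p satisfy y ≡ 1 (mod p), and let r ∈ ℤ_p satisfy r ≡ 1 (mod p) and r ≢ 1 (mod p²). Then for every f ∈ ℕ with f ≥ 1 and every C ∈ ℕ there exists a sequence of natural numbers (α⁽ⁱ⁾)_{i≥1} such that for all i ≥ 1: (p−1) divides α⁽¹⁾; α⁽ⁱ⁺¹⁾ ≡ α⁽ⁱ⁾ (mod φ(pⁱ)), where φ is Euler's totient function; r^{α⁽ⁱ⁾} ≡ y (mod pⁱ ℤ_p); (p^f − 1) divides α⁽ⁱ⁾; and α⁽ⁱ⁾ ≥ C. -/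
private lemma lemA' {R : Type*} [CommRing R] (b : R) (n : ℕ) :
    ∃ k : R, (1 + b) ^ n = 1 + n * b + b ^ 2 * k := by
  induction n with
  | zero => exact ⟨0, by simp⟩
  | succ n ih =>
    obtain ⟨k, hk⟩ := ih
    refine ⟨k * (1 + b) + n, ?_⟩
    have h : (1 + b) ^ (n + 1) = (1 + b) ^ n * (1 + b) := by ring
    rw [h, hk]; push_cast; ring

private lemma lemP' {R : Type*} [CommRing R] {p : ℕ} (hp : p.Prime) (b : R) :
    ∃ k : R, (1 + b) ^ p = 1 + p * b + p * b ^ 2 * k + b ^ p := by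
  have h2 : 2 ≤ p := hp.two_le
  have hdvd : ∀ m ∈ Finset.Ico 2 p, (p : R) * b ^ 2 ∣ b ^ m * (p.choose m : R) := by
    intro m hm
    simp only [Finset.mem_Ico] at hm
    obtain ⟨c, hc⟩ := hp.dvd_choose_self (by omega) hm.2
    obtain ⟨d, hd⟩ := pow_dvd_pow b hm.1
    exact ⟨d * c, by rw [hd, hc]; push_cast; ring⟩
  obtain ⟨K, hK⟩ := Finset.dvd_sum hdvd
  refine ⟨K, ?_⟩
  have hsum : (1 + b) ^ p = ∑ m ∈ Finset.range (p + 1), b ^ m * (p.choose m : R) := by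
    rw [add_comm, add_pow]; simp
  rw [hsum, Finset.range_eq_Ico, Finset.sum_Ico_succ_top (by omega : 0 ≤ p),
    Finset.sum_eq_sum_Ico_succ_bot (by omega : 0 < p),
    Finset.sum_eq_sum_Ico_succ_bot (by omega : 1 < p), hK]
  simp [Nat.choose_self, Nat.choose_one_right]
  ring

private lemma lemC' {R : Type*} [CommRing R] {p : ℕ} (hp : p.Prime) (hp3 : 3 ≤ p) (u : R) :
    ∀ i, 1 ≤ i → ∃ c : R,
      (1 + p * u) ^ (p ^ (i - 1)) = 1 + (p : R) ^ i * u + (p : R) ^ (i + 1) * c := by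
  intro i hi
  induction i, hi using Nat.le_induction with
  | base => exact ⟨0, by simp⟩
  | succ i hi ih =>
    obtain ⟨c, hc⟩ := ih
    obtain ⟨j, rfl⟩ : ∃ j, i = j + 1 := ⟨i - 1, by omega⟩
    set P : R := (p : R) with hP
    have hc' : (1 + (p:R) * u) ^ (p ^ j) = 1 + P ^ (j+1) * u + P ^ (j+2) * c := by
      simpa using hc
    set B : R := P ^ (j+1) * u + P ^ (j+2) * c with hB
    obtain ⟨k, hk⟩ := lemP' hp B
    have hQp : P ^ j * (P ^ j) ^ (p - 1) = (P ^ j) ^ p := by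
      rw [← pow_succ']; congr 1; omega
    have hPp : P ^ 3 * P ^ (p - 3) = P ^ p := by rw [← pow_add]; congr 1; omega
    have hBp : B ^ p = P ^ j * P ^ 3 * ((P ^ j) ^ (p-1) * P ^ (p-3) * (u + P * c) ^ p) := by
      have hB2 : B = P ^ j * P * (u + P * c) := by rw [hB]; ring
      calc B ^ p = (P ^ j * P * (u + P * c)) ^ p := by rw [hB2]
        _ = (P ^ j) ^ p * P ^ p * (u + P * c) ^ p := by rw [mul_pow, mul_pow]
        _ = (P ^ j * (P ^ j) ^ (p-1)) * (P ^ 3 * P ^ (p-3)) * (u + P * c) ^ p := by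
            rw [hQp, hPp]
        _ = _ := by ring
    refine ⟨c + P ^ j * (u + P * c) ^ 2 * k + (P ^ j) ^ (p-1) * P ^ (p-3) * (u + P * c) ^ p, ?_⟩
    have hpow : (1 + (p:R) * u) ^ (p ^ (j + 1 + 1 - 1)) = ((1 + (p:R) * u) ^ (p ^ j)) ^ p := by
      rw [show j + 1 + 1 - 1 = j + 1 from rfl, pow_succ, pow_mul]
    rw [hpow, hc', show (1:R) + P ^ (j+1) * u + P ^ (j+2) * c = 1 + B from by rw [hB]; ring,
      hk]
    rw [hBp]
    rw [hB]
    ring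
private lemma stepLem' {p : ℕ} [hp : Fact p.Prime] (hp3 : 3 ≤ p) (u y : ℤ_[p])
    (hy1 : PadicInt.toZMod y = 1) (hu : PadicInt.toZMod u ≠ 0)
    (M : ℕ) (hM : (M : ZMod p) ≠ 0)
    (i a : ℕ) (hi : 1 ≤ i)
    (ha : (p : ℤ_[p]) ^ i ∣ (1 + p * u) ^ a - y) :
    ∃ t : ℕ, (p : ℤ_[p]) ^ (i + 1) ∣ (1 + p * u) ^ (a + p ^ (i - 1) * (M * t)) - y := by
  obtain ⟨w, hw⟩ := ha
  obtain ⟨c, hc⟩ := lemC' hp.out hp3 u i hi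
  set t : ℕ := ((- PadicInt.toZMod w) * ((M : ZMod p) * PadicInt.toZMod u)⁻¹).val with htdef
  have hMu : (M : ZMod p) * PadicInt.toZMod u ≠ 0 := mul_ne_zero hM hu
  have htc : ((t : ℕ) : ZMod p) = (- PadicInt.toZMod w) * ((M : ZMod p) * PadicInt.toZMod u)⁻¹ :=
    ZMod.natCast_rightInverse _
  have ht0 : PadicInt.toZMod (w + ((M * t : ℕ) : ℤ_[p]) * u * y) = 0 := by
    rw [map_add, map_mul, map_mul, map_natCast, hy1]
    push_cast
    rw [htc]
    linear_combination (- PadicInt.toZMod w) * mul_inv_cancel₀ hMu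
  have hts : (p : ℤ_[p]) ∣ w + ((M * t : ℕ) : ℤ_[p]) * u * y := by
    rw [← Ideal.mem_span_singleton, ← PadicInt.maximalIdeal_eq_span_p, ← PadicInt.ker_toZMod]
    exact ht0
  obtain ⟨s, hs⟩ := hts
  refine ⟨t, ?_⟩
  obtain ⟨k, hk⟩ := lemA' ((p : ℤ_[p]) ^ i * u + (p : ℤ_[p]) ^ (i + 1) * c) (M * t)
  obtain ⟨j, rfl⟩ : ∃ j, i = j + 1 := ⟨i - 1, by omega⟩
  set P : ℤ_[p] := (p : ℤ_[p]) with hP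
  set N : ℤ_[p] := ((M * t : ℕ) : ℤ_[p]) with hN
  refine ⟨s + y * N * c + P ^ j * (u + P * c) ^ 2 * k * (y + P ^ (j + 1) * w)
      + P ^ j * w * N * (u + P * c), ?_⟩
  have hc' : (1 + (p : ℤ_[p]) * u) ^ (p ^ j) = 1 + P ^ (j + 1) * u + P ^ (j + 2) * c := by
    simpa using hc
  have hexp : (1 + (p : ℤ_[p]) * u) ^ (a + p ^ (j + 1 - 1) * (M * t))
      = (1 + (p : ℤ_[p]) * u) ^ a * ((1 + (p : ℤ_[p]) * u) ^ (p ^ j)) ^ (M * t) := by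
    rw [show j + 1 - 1 = j from rfl, pow_add, pow_mul]
  have hw' : (1 + (p : ℤ_[p]) * u) ^ a = y + P ^ (j + 1) * w := by
    linear_combination hw
  rw [hexp, hc', show (1 : ℤ_[p]) + P ^ (j + 1) * u + P ^ (j + 2) * c
      = 1 + (P ^ (j + 1) * u + P ^ (j + 2) * c) from by ring, hk, hw']
  have hs' : w + N * u * y = P * s := hs
  linear_combination (P ^ (j + 1)) * hs'


/-- Let `p` be an odd prime, `y ∈ ℤ_p` with `y ≡ 1 (mod p)`,
and `r ∈ ℤ_p` with `r ≡ 1 (mod p)` but `r ≢ 1 (mod p²)`.  Then for every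
`f ≥ 1` and every `C` there is a sequence `(α⁽ⁱ⁾)_{i≥1}` of natural numbers
with `(p−1) ∣ α⁽¹⁾`, `α⁽ⁱ⁺¹⁾ ≡ α⁽ⁱ⁾ (mod φ(pⁱ))`, `r^(α⁽ⁱ⁾) ≡ y (mod pⁱ ℤ_p)`,
`(p^f − 1) ∣ α⁽ⁱ⁾` and `α⁽ⁱ⁾ ≥ C` for all `i ≥ 1`. -/
theorem exists_exponent_sequence (p : ℕ) [Fact p.Prime] (hodd : p ≠ 2)
    (y r : ℤ_[p])
    (hy : y - 1 ∈ Ideal.span ({(p : ℤ_[p])} : Set ℤ_[p]))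
    (hr1 : r - 1 ∈ Ideal.span ({(p : ℤ_[p])} : Set ℤ_[p]))
    (hr2 : r - 1 ∉ Ideal.span ({((p : ℤ_[p]) ^ 2)} : Set ℤ_[p]))
    (f C : ℕ) (hf : 1 ≤ f) :
    ∃ α : ℕ → ℕ, (p - 1) ∣ α 1 ∧
      ∀ i : ℕ, 1 ≤ i →
        (α (i + 1) ≡ α i [MOD Nat.totient (p ^ i)]) ∧
        (r ^ α i - y ∈ Ideal.span ({((p : ℤ_[p]) ^ i)} : Set ℤ_[p])) ∧
        ((p ^ f - 1) ∣ α i) ∧ C ≤ α i := by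
  have hp : p.Prime := Fact.out
  have hp3 : 3 ≤ p := by
    have := hp.two_le; omega
  obtain ⟨u, hu⟩ : (p : ℤ_[p]) ∣ r - 1 := Ideal.mem_span_singleton.1 hr1
  have hr : r = 1 + (p : ℤ_[p]) * u := by linear_combination hu
  subst hr
  have hu0 : PadicInt.toZMod u ≠ 0 := by
    intro h0
    have hmem : (p : ℤ_[p]) ∣ u := by
      rw [← Ideal.mem_span_singleton, ← PadicInt.maximalIdeal_eq_span_p, ← PadicInt.ker_toZMod]
      exact h0
    obtain ⟨v, hv⟩ := hmem
    apply hr2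
    rw [Ideal.mem_span_singleton]
    exact ⟨v, by rw [show (1 : ℤ_[p]) + (p : ℤ_[p]) * u - 1 = (p:ℤ_[p]) * u from by ring, hv]; ring⟩
  have hy1 : PadicInt.toZMod y = 1 := by
    obtain ⟨z, hz⟩ : (p : ℤ_[p]) ∣ y - 1 := Ideal.mem_span_singleton.1 hy
    have : PadicInt.toZMod (y - 1) = 0 := by
      rw [hz, map_mul]
      simp
    rw [map_sub, map_one, sub_eq_zero] at this
    exact this
  set M : ℕ := (p - 1) * (p ^ f - 1) with hMdef
  have hpf : p ≤ p ^ f := Nat.le_self_pow (by omega) p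
  have hM0 : (M : ZMod p) ≠ 0 := by
    intro h
    have hdvd : p ∣ M := (ZMod.natCast_eq_zero_iff _ _).1 h
    rcases (Nat.Prime.dvd_mul hp).1 hdvd with h1 | h2
    · have := Nat.le_of_dvd (by omega) h1; omega
    · have h3 : p ∣ p ^ f - (p ^ f - 1) := Nat.dvd_sub (dvd_pow_self p (by omega)) h2
      have h4 : p ^ f - (p ^ f - 1) = 1 := by omega
      rw [h4] at h3
      have := Nat.le_of_dvd (by omega) h3; omega
  have hM1 : 1 ≤ M := by
    have : 1 * 1 ≤ (p - 1) * (p ^ f - 1) := Nat.mul_le_mul (by omega) (by omega)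
    omega
  set base : ℕ := M * (C + 1) with hbase
  have key : ∀ i a : ℕ, ∃ a' : ℕ,
      (¬ 1 ≤ i → a' = a) ∧
      (1 ≤ i → (p : ℤ_[p]) ^ i ∣ (1 + (p : ℤ_[p]) * u) ^ a - y → M ∣ a → C ≤ a →
        (a ≤ a' ∧ (p ^ (i - 1) * (p - 1)) ∣ (a' - a) ∧
          (p : ℤ_[p]) ^ (i + 1) ∣ (1 + (p : ℤ_[p]) * u) ^ a' - y ∧ M ∣ a' ∧ C ≤ a')) := by
    intro i a
    by_cases hi : 1 ≤ i
    · by_cases hcond : (p : ℤ_[p]) ^ i ∣ (1 + (p : ℤ_[p]) * u) ^ a - y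
      · obtain ⟨t, ht⟩ := stepLem' hp3 u y hy1 hu0 M hM0 i a hi hcond
        refine ⟨a + p ^ (i - 1) * (M * t), fun h => absurd hi h, fun _ _ hMa hCa => ?_⟩
        refine ⟨Nat.le_add_right _ _, ?_, ht, ?_, le_trans hCa (Nat.le_add_right _ _)⟩
        · refine ⟨(p ^ f - 1) * t, ?_⟩
          rw [Nat.add_sub_cancel_left, hMdef]
          ring
        · exact dvd_add hMa ⟨p ^ (i - 1) * t, by ring⟩
      · exact ⟨a, fun _ => rfl, fun _ h => absurd h hcond⟩
    · exact ⟨a, fun _ => rfl, fun h => absurd h hi⟩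
  choose g hg using key
  refine ⟨fun n => Nat.rec base (fun i prev => g i prev) n, ?_, ?_⟩
  all_goals {
    set α : ℕ → ℕ := fun n => Nat.rec base (fun i prev => g i prev) n with hα
    have hαs : ∀ n, α (n + 1) = g n (α n) := fun n => rfl
    have hα1 : α 1 = base := (hg 0 base).1 (by omega)
    have inv : ∀ i, 1 ≤ i →
        ((p : ℤ_[p]) ^ i ∣ (1 + (p : ℤ_[p]) * u) ^ (α i) - y ∧ M ∣ α i ∧ C ≤ α i) := by
      intro i hi
      induction i, hi using Nat.le_induction with
      | base =>
        rw [hα1]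
        refine ⟨?_, ⟨C + 1, rfl⟩, ?_⟩
        · rw [pow_one]
          have h1 : (p : ℤ_[p]) ∣ (1 + (p : ℤ_[p]) * u) ^ base - 1 := by
            have h0 : ((1 + (p : ℤ_[p]) * u) - 1) ∣ ((1 + (p : ℤ_[p]) * u) ^ base - 1 ^ base) :=
              sub_dvd_pow_sub_pow _ _ _
            simp only [one_pow] at h0
            exact dvd_trans ⟨u, by ring⟩ h0
          have h2 : (p : ℤ_[p]) ∣ y - 1 := Ideal.mem_span_singleton.1 hy
          have h3 : (1 + (p : ℤ_[p]) * u) ^ base - y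
              = ((1 + (p : ℤ_[p]) * u) ^ base - 1) - (y - 1) := by ring
          rw [h3]
          exact dvd_sub h1 h2
        · have : 1 * (C + 1) ≤ M * (C + 1) := Nat.mul_le_mul_right _ hM1
          omega
      | succ i hi ih =>
        obtain ⟨h1, h2, h3⟩ := ih
        obtain ⟨_, _, h4, h5, h6⟩ := (hg i (α i)).2 hi h1 h2 h3
        rw [hαs]
        exact ⟨h4, h5, h6⟩
    first
    | · rw [hα1, hbase, hMdef]
        exact ⟨(p ^ f - 1) * (C + 1), by ring⟩
    | · intro i hi
        obtain ⟨h1, h2, h3⟩ := inv i hi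
        obtain ⟨hle, hdvd, _⟩ := (hg i (α i)).2 hi h1 h2 h3
        refine ⟨?_, ?_, ?_, h3⟩
        · have htot : Nat.totient (p ^ i) = p ^ (i - 1) * (p - 1) :=
            Nat.totient_prime_pow hp (by omega)
          rw [htot, hαs]
          exact ((Nat.modEq_iff_dvd' hle).2 hdvd).symm
        · rw [Ideal.mem_span_singleton]
          exact h1
        · exact dvd_trans ⟨p - 1, by rw [hMdef]; ring⟩ h2
  }
end
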